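/- arXiv:1802.08647 — 10 statements merged into one kernel-verified Lean document; each statement's English description precedes it below -/
import Mathlib

section
/- Let D = M₊ ⊕ M₋ be a closed subspace of ℋ, where M₊ ⊆ ℋ₊ and M₋ ⊆ ℋ₋ are closed subspaces, and let T₀ : D → ℋ be a linear strong contraction satisfying J T₀ f = −T₀ J f for all f ∈ D (note J maps D into D). Set L₊ = (I + T₀)(M₊) and L₋ = (I + T₀)(M₋). Then [f₊, f₋] = 0 for all f₊ ∈ L₊ and all f₋ ∈ L₋ if and only if T₀ is symmetric, i.e. ⟨T₀ f, g⟩ = ⟨f, T₀ g⟩ for all f, g ∈ D. -/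
/-!
On `D = M₊ ⊕ M₋` the anticommutation `J T₀ = -T₀ J` makes `T₀` swap the `±1`-eigenspaces of `J`,
which are orthogonal. Hence for `x ∈ M₊`, `y ∈ M₋` one has
`[x + T₀x, y + T₀y] = ⟨x - T₀x, y + T₀y⟩ = ⟨x, T₀y⟩ - ⟨T₀x, y⟩`, and the same orthogonality
makes `⟨T₀f, g⟩ = ⟨f, T₀g⟩` automatic when `f, g` lie in the same `M±`; so symmetry on `D`
reduces to the mixed pairs, which is exactly `L₊ [⊥] L₋`.
-/

open scoped InnerProductSpace

section

variable {𝕜 H : Type*} [RCLike 𝕜] [NormedAddCommGroup H] [InnerProductSpace 𝕜 H]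
  [CompleteSpace H] {J : H →L[𝕜] H}

theorem IsSelfAdjoint.inner_eq_zero_of_apply_eq_self_of_apply_eq_neg (hJ : IsSelfAdjoint J)
    {a b : H} (ha : J a = a) (hb : J b = -b) : ⟪a, b⟫_𝕜 = 0 := by
  have h : ⟪a, b⟫_𝕜 = -⟪a, b⟫_𝕜 :=
    calc ⟪a, b⟫_𝕜 = ⟪J a, b⟫_𝕜 := by rw [ha]
      _ = ⟪a, J b⟫_𝕜 := hJ.isSymmetric a b
      _ = -⟪a, b⟫_𝕜 := by rw [hb, inner_neg_right]
  exact CharZero.eq_neg_self_iff.mp h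

theorem IsSelfAdjoint.inner_eq_zero_of_apply_eq_neg_of_apply_eq_self (hJ : IsSelfAdjoint J)
    {a b : H} (ha : J a = -a) (hb : J b = b) : ⟪a, b⟫_𝕜 = 0 :=
  inner_eq_zero_symm.mp (hJ.inner_eq_zero_of_apply_eq_self_of_apply_eq_neg hb ha)

section SwapEigenspaces

variable (hJ : IsSelfAdjoint J) {Mp Mm : Submodule 𝕜 H}
  (hMp : ∀ x ∈ Mp, J x = x) (hMm : ∀ y ∈ Mm, J y = -y)
  {T : H →ₗ[𝕜] H} (hTp : ∀ x ∈ Mp, J (T x) = -T x) (hTm : ∀ y ∈ Mm, J (T y) = T y)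
include hJ hMp hMm hTp hTm

theorem inner_apply_add_apply_eq_sub {x y : H} (hx : x ∈ Mp) (hy : y ∈ Mm) :
    ⟪J (x + T x), y + T y⟫_𝕜 = ⟪x, T y⟫_𝕜 - ⟪T x, y⟫_𝕜 := by
  rw [map_add, hMp x hx, hTp x hx, inner_add_left, inner_neg_left, inner_add_right,
    inner_add_right,
    hJ.inner_eq_zero_of_apply_eq_self_of_apply_eq_neg (hMp x hx) (hMm y hy),
    hJ.inner_eq_zero_of_apply_eq_neg_of_apply_eq_self (hTp x hx) (hTm y hy)]
  ring

theorem symmetric_on_sup_iff :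
    (∀ f ∈ Mp ⊔ Mm, ∀ g ∈ Mp ⊔ Mm, ⟪T f, g⟫_𝕜 = ⟪f, T g⟫_𝕜) ↔
      ∀ x ∈ Mp, ∀ y ∈ Mm, ⟪T x, y⟫_𝕜 = ⟪x, T y⟫_𝕜 := by
  refine ⟨fun h x hx y hy => h x (Submodule.mem_sup_left hx) y (Submodule.mem_sup_right hy),
    fun h f hf g hg => ?_⟩
  obtain ⟨x, hx, x', hx', rfl⟩ := Submodule.mem_sup.mp hf
  obtain ⟨y, hy, y', hy', rfl⟩ := Submodule.mem_sup.mp hg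
  have hswap : ⟪T x', y⟫_𝕜 = ⟪x', T y⟫_𝕜 := by
    rw [← inner_conj_symm, ← h y hy x' hx', inner_conj_symm]
  simp only [map_add, inner_add_left, inner_add_right]
  rw [hJ.inner_eq_zero_of_apply_eq_neg_of_apply_eq_self (hTp x hx) (hMp y hy),
    hJ.inner_eq_zero_of_apply_eq_self_of_apply_eq_neg (hTm x' hx') (hMm y' hy'),
    hJ.inner_eq_zero_of_apply_eq_self_of_apply_eq_neg (hMp x hx) (hTp y hy),
    hJ.inner_eq_zero_of_apply_eq_neg_of_apply_eq_self (hMm x' hx') (hTm y' hy'),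
    h x hx y' hy', hswap]

end SwapEigenspaces

end

theorem stmt_0_general
    {H : Type*} [NormedAddCommGroup H] [InnerProductSpace ℂ H] [CompleteSpace H]
    (J : H →L[ℂ] H) (hJsa : IsSelfAdjoint J)
    (Mp Mm : Submodule ℂ H)
    (hMp : ∀ x ∈ Mp, J x = x) (hMm : ∀ x ∈ Mm, J x = -x)
    (D : Submodule ℂ H) (hD : D = Mp ⊔ Mm)
    (T₀ : H →ₗ[ℂ] H)
    (hanti : ∀ f ∈ D, J (T₀ f) = -T₀ (J f)) :
    (∀ x ∈ Mp, ∀ y ∈ Mm,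
        (inner ℂ (J (x + T₀ x)) (y + T₀ y) : ℂ) = 0) ↔
      (∀ f ∈ D, ∀ g ∈ D, (inner ℂ (T₀ f) g : ℂ) = inner ℂ f (T₀ g)) := by
  subst hD
  have hTp : ∀ x ∈ Mp, J (T₀ x) = -T₀ x := fun x hx => by
    rw [hanti x (Submodule.mem_sup_left hx), hMp x hx]
  have hTm : ∀ y ∈ Mm, J (T₀ y) = T₀ y := fun y hy => by
    rw [hanti y (Submodule.mem_sup_right hy), hMm y hy, map_neg, neg_neg]
  rw [symmetric_on_sup_iff hJsa hMp hMm hTp hTm]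
  refine forall₂_congr fun x hx => forall₂_congr fun y hy => ?_
  rw [inner_apply_add_apply_eq_sub hJsa hMp hMm hTp hTm hx hy, sub_eq_zero, eq_comm]

/-- Orthogonality of the dual subspaces `L± = (I+T₀)M±` with respect to the
indefinite inner product `[f,g] = ⟨Jf,g⟩` is equivalent to the symmetry of `T₀` on
`D = M₊ ⊕ M₋`. -/
theorem stmt_0
    {H : Type*} [NormedAddCommGroup H] [InnerProductSpace ℂ H] [CompleteSpace H]
    (J : H →L[ℂ] H) (hJsa : IsSelfAdjoint J) (hJ2 : J ∘L J = 1)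
    (Mp Mm : Submodule ℂ H)
    (hMpc : IsClosed (Mp : Set H)) (hMmc : IsClosed (Mm : Set H))
    (hMp : ∀ x ∈ Mp, J x = x) (hMm : ∀ x ∈ Mm, J x = -x)
    (D : Submodule ℂ H) (hD : D = Mp ⊔ Mm) (hDc : IsClosed (D : Set H))
    (T₀ : H →ₗ[ℂ] H)
    (hsc : ∀ f ∈ D, f ≠ 0 → ‖T₀ f‖ < ‖f‖)
    (hJD : ∀ f ∈ D, J f ∈ D)
    (hanti : ∀ f ∈ D, J (T₀ f) = -T₀ (J f)) :
    (∀ x ∈ Mp, ∀ y ∈ Mm,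
        (inner ℂ (J (x + T₀ x)) (y + T₀ y) : ℂ) = 0) ↔
      (∀ f ∈ D, ∀ g ∈ D, (inner ℂ (T₀ f) g : ℂ) = inner ℂ f (T₀ g)) :=
  stmt_0_general J hJsa Mp Mm hMp hMm D hD T₀ hanti
end

section
/- Let L₊ be a closed positive subspace of the Krein space (ℋ, [·,·]). Then M₊ := P₊(L₊) is a closed subspace of ℋ₊, and there exists a unique linear strong contraction K : M₊ → ℋ₋ such that L₊ = {x + Kx : x ∈ M₊}. -/
/-!
A vector `f` of a positive subspace satisfies `‖P₊ f‖² - ‖P₋ f‖² = [f, f] > 0` and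
`‖P₊ f‖² + ‖P₋ f‖² = ‖f‖²`. Hence `P₊` is bounded below on `L₊`, so it maps the closed subspace
`L₊` bijectively onto a closed subspace `M₊`, and `K := P₋ ∘ (P₊|_{L₊})⁻¹` satisfies
`‖K x‖ < ‖x‖`. Uniqueness holds because `P₊ (x + K x) = x` whenever `J x = x` and `J (K x) = -K x`.
-/

/-- The orthogonal projection `P₊ = ½(I + J)` onto `ℋ₊ = ker (J - I)`, as a linear map. -/
noncomputable def Pplus {H : Type*} [NormedAddCommGroup H] [InnerProductSpace ℂ H]
    (J : H →L[ℂ] H) : H →ₗ[ℂ] H :=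
  (2 : ℂ)⁻¹ • (LinearMap.id + J.toLinearMap)

open scoped NNReal

theorem Submodule.isClosed_map_of_norm_le_mul {𝕜 E F : Type*} [NontriviallyNormedField 𝕜]
    [NormedAddCommGroup E] [NormedSpace 𝕜 E] [CompleteSpace E]
    [NormedAddCommGroup F] [NormedSpace 𝕜 F] (T : E →L[𝕜] F) {L : Submodule 𝕜 E}
    (hL : IsClosed (L : Set E)) (C : ℝ≥0) (hT : ∀ u ∈ L, ‖u‖ ≤ C * ‖T u‖) :
    IsClosed (L.map (T : E →ₗ[𝕜] F) : Set F) := by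
  have : CompleteSpace L := hL.completeSpace_coe
  let T' : L →L[𝕜] F := T.comp L.subtypeL
  have hrange : Set.range T' = L.map (T : E →ₗ[𝕜] F) := by
    ext y
    simp [T']
  rw [← hrange]
  exact (T'.antilipschitz_of_bound fun u ↦ hT u u.2).isClosed_range T'.uniformContinuous

theorem Submodule.exists_rightInverse_of_injOn {R M N : Type*} [Ring R] [AddCommGroup M]
    [Module R M] [AddCommGroup N] [Module R N] (P : M →ₗ[R] N) {L : Submodule R M}
    (hinj : Set.InjOn P L) :
    ∃ S : L.map P →ₗ[R] M, ∀ x, S x ∈ L ∧ P (S x) = x := by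
  have hinj' : Function.Injective (P.domRestrict L) := fun u v h ↦
    Subtype.ext (hinj u.2 v.2 h)
  let e : L ≃ₗ[R] L.map P :=
    (LinearEquiv.ofInjective _ hinj').trans
      (LinearEquiv.ofEq _ _ (LinearMap.range_domRestrict L P))
  refine ⟨L.subtype ∘ₗ e.symm.toLinearMap, fun x ↦ ⟨(e.symm x).2, ?_⟩⟩
  exact congrArg Subtype.val (e.apply_symm_apply x)

noncomputable def Pminus {H : Type*} [NormedAddCommGroup H] [InnerProductSpace ℂ H]
    (J : H →L[ℂ] H) : H →ₗ[ℂ] H :=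
  (2 : ℂ)⁻¹ • (LinearMap.id - J.toLinearMap)

section FundamentalSymmetry

variable {H : Type*} [NormedAddCommGroup H] [InnerProductSpace ℂ H] {J : H →L[ℂ] H}

theorem Pplus_apply (f : H) : Pplus J f = (2 : ℂ)⁻¹ • (f + J f) := by simp [Pplus]

theorem Pminus_apply (f : H) : Pminus J f = (2 : ℂ)⁻¹ • (f - J f) := by simp [Pminus]

theorem Pplus_eq_coe : Pplus J = ((2 : ℂ)⁻¹ • (1 + J) : H →L[ℂ] H) := by
  ext f
  simp [Pplus_apply]

theorem Pplus_add_Pminus (f : H) : Pplus J f + Pminus J f = f := by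
  rw [Pplus_apply, Pminus_apply]
  module

theorem Pplus_add_of_apply_eq {x y : H} (hx : J x = x) (hy : J y = -y) :
    Pplus J (x + y) = x := by
  rw [Pplus_apply, map_add, hx, hy]
  module

theorem eq_of_range_add_eq {M : Submodule ℂ H} (hM : ∀ x ∈ M, J x = x) {K K' : M →ₗ[ℂ] H}
    (hK : ∀ x, J (K x) = -K x) (hK' : ∀ x, J (K' x) = -K' x)
    (h : (Set.range fun x : M ↦ (x : H) + K x) = Set.range fun x : M ↦ (x : H) + K' x) :
    K = K' := by
  ext x
  obtain ⟨y, hy⟩ : (x : H) + K' x ∈ Set.range fun x : M ↦ (x : H) + K x := h ▸ ⟨x, rfl⟩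
  have hyx : y = x := Subtype.ext <| by
    simpa only [Pplus_add_of_apply_eq (hM _ y.2) (hK y),
      Pplus_add_of_apply_eq (hM _ x.2) (hK' x)] using congrArg (Pplus J) hy
  subst hyx
  exact add_left_cancel hy

variable (hJ2 : J ∘L J = 1)
include hJ2

theorem apply_apply_of_comp_self_eq_one (f : H) : J (J f) = f := by
  simpa using ContinuousLinearMap.ext_iff.mp hJ2 f

theorem apply_Pplus (f : H) : J (Pplus J f) = Pplus J f := by
  rw [Pplus_apply, map_smul, map_add, apply_apply_of_comp_self_eq_one hJ2]
  module

theorem apply_Pminus (f : H) : J (Pminus J f) = -Pminus J f := by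
  rw [Pminus_apply, map_smul, map_sub, apply_apply_of_comp_self_eq_one hJ2]
  module

theorem apply_eq_self_of_mem_map_Pplus {Lp : Submodule ℂ H} {x : H}
    (hx : x ∈ Lp.map (Pplus J)) : J x = x := by
  obtain ⟨f, -, rfl⟩ := hx
  exact apply_Pplus hJ2 f

variable (hJ : (J : H →ₗ[ℂ] H).IsSymmetric)
include hJ

theorem norm_apply_of_isSymmetric (f : H) : ‖J f‖ = ‖f‖ := by
  have h : (inner ℂ (J f) (J f) : ℂ) = inner ℂ f (J (J f)) := hJ f (J f)
  rw [apply_apply_of_comp_self_eq_one hJ2, inner_self_eq_norm_sq_to_K,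
    inner_self_eq_norm_sq_to_K] at h
  exact (sq_eq_sq₀ (norm_nonneg _) (norm_nonneg _)).mp (by exact_mod_cast h)

theorem norm_sq_Pplus (f : H) :
    ‖Pplus J f‖ ^ 2 = (‖f‖ ^ 2 + (inner ℂ (J f) f).re) / 2 := by
  rw [Pplus_apply, norm_smul, mul_pow, norm_add_sq (𝕜 := ℂ),
    norm_apply_of_isSymmetric hJ2 hJ, inner_re_symm]
  norm_num
  ring

theorem norm_sq_Pminus (f : H) :
    ‖Pminus J f‖ ^ 2 = (‖f‖ ^ 2 - (inner ℂ (J f) f).re) / 2 := by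
  rw [Pminus_apply, norm_smul, mul_pow, norm_sub_sq (𝕜 := ℂ),
    norm_apply_of_isSymmetric hJ2 hJ, inner_re_symm]
  norm_num
  ring

end FundamentalSymmetry

section PositiveSubspace

variable {H : Type*} [NormedAddCommGroup H] [InnerProductSpace ℂ H] {J : H →L[ℂ] H}
  (hJ2 : J ∘L J = 1) (hJ : (J : H →ₗ[ℂ] H).IsSymmetric) {Lp : Submodule ℂ H}
  (hpos : ∀ f ∈ Lp, f ≠ 0 → 0 < (inner ℂ (J f) f : ℂ).re)
include hJ2 hJ hpos

theorem norm_le_two_mul_norm_Pplus {f : H} (hf : f ∈ Lp) : ‖f‖ ≤ 2 * ‖Pplus J f‖ := by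
  rcases eq_or_ne f 0 with rfl | hf0
  · simp
  have := hpos f hf hf0
  have := norm_sq_Pplus hJ2 hJ f
  nlinarith [norm_nonneg f, norm_nonneg (Pplus J f)]

theorem norm_Pminus_lt_norm_Pplus {f : H} (hf : f ∈ Lp) (hf0 : f ≠ 0) :
    ‖Pminus J f‖ < ‖Pplus J f‖ := by
  refine lt_of_pow_lt_pow_left₀ 2 (norm_nonneg _) ?_
  rw [norm_sq_Pplus hJ2 hJ, norm_sq_Pminus hJ2 hJ]
  linarith [hpos f hf hf0]

theorem injOn_Pplus : Set.InjOn (Pplus J) Lp := by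
  intro f hf g hg hfg
  have := norm_le_two_mul_norm_Pplus hJ2 hJ hpos (Lp.sub_mem hf hg)
  rw [map_sub, hfg, sub_self, norm_zero, mul_zero] at this
  exact sub_eq_zero.mp (norm_le_zero_iff.mp this)

theorem isClosed_map_Pplus [CompleteSpace H] (hLp : IsClosed (Lp : Set H)) :
    IsClosed (Lp.map (Pplus J) : Set H) := by
  rw [Pplus_eq_coe]
  refine Submodule.isClosed_map_of_norm_le_mul _ hLp 2 fun u hu ↦ ?_
  have := norm_le_two_mul_norm_Pplus hJ2 hJ hpos hu
  rwa [Pplus_eq_coe] at this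

theorem exists_strongContraction_graph :
    ∃ K : Lp.map (Pplus J) →ₗ[ℂ] H,
      (∀ x, J (K x) = -K x) ∧
      (∀ x : Lp.map (Pplus J), (x : H) ≠ 0 → ‖K x‖ < ‖(x : H)‖) ∧
      (Lp : Set H) = Set.range fun x : Lp.map (Pplus J) ↦ (x : H) + K x := by
  obtain ⟨S, hS⟩ := Submodule.exists_rightInverse_of_injOn _ (injOn_Pplus hJ2 hJ hpos)
  have hgraph : ∀ x : Lp.map (Pplus J), (x : H) + Pminus J (S x) = S x := fun x ↦ by
    rw [← (hS x).2, Pplus_add_Pminus]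
  refine ⟨Pminus J ∘ₗ S, fun x ↦ apply_Pminus hJ2 _, fun x hx ↦ ?_, ?_⟩
  · have hSx : S x ≠ 0 := fun h ↦ hx (by rw [← (hS x).2, h, map_zero])
    simpa only [LinearMap.comp_apply, (hS x).2] using
      norm_Pminus_lt_norm_Pplus hJ2 hJ hpos (hS x).1 hSx
  · ext f
    simp only [LinearMap.comp_apply, hgraph, SetLike.mem_coe, Set.mem_range]
    refine ⟨fun hf ↦ ⟨⟨Pplus J f, f, hf, rfl⟩, ?_⟩, ?_⟩
    · exact injOn_Pplus hJ2 hJ hpos (hS _).1 hf (hS _).2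
    · rintro ⟨x, rfl⟩
      exact (hS x).1

end PositiveSubspace

/-- A closed positive subspace `L₊` of the Krein space `(H,[·,·])` is the graph
`{x + Kx : x ∈ M₊}` of a unique strong contraction `K : M₊ → ℋ₋`, where `M₊ = P₊(L₊)` is a
closed subspace of `ℋ₊`. -/
theorem stmt_2
    {H : Type*} [NormedAddCommGroup H] [InnerProductSpace ℂ H] [CompleteSpace H]
    (J : H →L[ℂ] H) (hJsa : IsSelfAdjoint J) (hJ2 : J ∘L J = 1)
    (Lp : Submodule ℂ H) (hLpc : IsClosed (Lp : Set H))
    (hpos : ∀ f ∈ Lp, f ≠ 0 → 0 < (inner ℂ (J f) f : ℂ).re) :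
    IsClosed ((Lp.map (Pplus J) : Submodule ℂ H) : Set H) ∧
    (∀ x ∈ Lp.map (Pplus J), J x = x) ∧
    ∃! K : ↥(Lp.map (Pplus J)) →ₗ[ℂ] H,
      (∀ x : ↥(Lp.map (Pplus J)), J (K x) = -(K x)) ∧
      (∀ x : ↥(Lp.map (Pplus J)), (x : H) ≠ 0 → ‖K x‖ < ‖(x : H)‖) ∧
      (Lp : Set H) = Set.range fun x : ↥(Lp.map (Pplus J)) => (x : H) + K x := by
  have hJ : (J : H →ₗ[ℂ] H).IsSymmetric :=
    ContinuousLinearMap.isSelfAdjoint_iff_isSymmetric.mp hJsa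
  have hM : ∀ x ∈ Lp.map (Pplus J), J x = x := fun _ ↦ apply_eq_self_of_mem_map_Pplus hJ2
  obtain ⟨K, hK, hKlt, hKgraph⟩ := exists_strongContraction_graph hJ2 hJ hpos
  refine ⟨isClosed_map_Pplus hJ2 hJ hpos hLpc, hM, K, ⟨hK, hKlt, hKgraph⟩, ?_⟩
  rintro K' ⟨hK', -, hK'graph⟩
  exact eq_of_range_add_eq hM hK' hK (hK'graph.symm.trans hKgraph)
end

section
/- Let T : ℋ → ℋ be a bounded self-adjoint operator with ‖T‖ ≤ 1 and J T = −T J. Then I + T and I − T are positive operators, and J ∘ √(I + T) = √(I − T) ∘ J, where √· denotes the unique positive square root of a positive self-adjoint operator. -/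
/-!
Since `T` is a self-adjoint contraction, `-1 ≤ T ≤ 1`, so `1 ± T ≥ 0`. If `S` is the positive
square root of `1 + T`, then `J S J` is positive (a conjugate of `S` by the self-adjoint `J`), and
`(J S J)² = J (1 + T) J = 1 - T` because `J` is an involution anticommuting with `T`. By uniqueness
of positive square roots `J S J = √(1 - T)`, i.e. `J S = √(1 - T) J`.
-/

lemma conj_mul_conj_eq_one_sub_of_anticomm {R : Type*} [Ring R] {J T S : R} (hJ : J * J = 1)
    (hJT : J * T = -(T * J)) (hS : S * S = 1 + T) : (J * S * J) * (J * S * J) = 1 - T := by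
  calc (J * S * J) * (J * S * J) = J * S * (J * J) * S * J := by simp only [mul_assoc]
    _ = J * (1 + T) * J := by rw [hJ, mul_one, mul_assoc J S S, hS]
    _ = 1 - T := by rw [mul_add, mul_one, add_mul, hJ, hJT, neg_mul, mul_assoc, hJ, mul_one,
      sub_eq_add_neg]

section CStarAlgebra

variable {A : Type*} [CStarAlgebra A] [PartialOrder A] [StarOrderedRing A]

lemma IsSelfAdjoint.one_add_nonneg_of_norm_le_one {T : A} (hT : IsSelfAdjoint T)
    (hT₁ : ‖T‖ ≤ 1) : 0 ≤ 1 + T := by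
  have h : -1 ≤ -(algebraMap ℝ A ‖T‖) := by
    rw [neg_le_neg_iff, ← map_one (algebraMap ℝ A)]
    exact algebraMap_mono A hT₁
  rw [← neg_le_iff_add_nonneg']
  exact h.trans hT.neg_algebraMap_norm_le_self

lemma IsSelfAdjoint.one_sub_nonneg_of_norm_le_one {T : A} (hT : IsSelfAdjoint T)
    (hT₁ : ‖T‖ ≤ 1) : 0 ≤ 1 - T := by
  simpa [sub_eq_add_neg] using hT.neg.one_add_nonneg_of_norm_le_one (by simpa using hT₁)

lemma IsSelfAdjoint.mul_sqrt_one_add_eq_sqrt_one_sub_mul {J T : A} (hJ : IsSelfAdjoint J)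
    (hJ₂ : J * J = 1) (hJT : J * T = -(T * J)) (hT : 0 ≤ 1 + T) :
    J * CFC.sqrt (1 + T) = CFC.sqrt (1 - T) * J := by
  have hsq := conj_mul_conj_eq_one_sub_of_anticomm hJ₂ hJT (CFC.sqrt_mul_sqrt_self _ hT)
  rw [CFC.sqrt_unique hsq (hJ.conjugate_nonneg (CFC.sqrt_nonneg _)), mul_assoc _ J J, hJ₂,
    mul_one]

end CStarAlgebra

/-- If `T` is a self-adjoint contraction anticommuting with `J`, then `I ± T`
are positive and `J √(I+T) = √(I−T) J`, where the square roots are the (unique) positive square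
roots of `I + T` and `I − T`. -/
theorem stmt_7
    {H : Type*} [NormedAddCommGroup H] [InnerProductSpace ℂ H] [CompleteSpace H]
    (J : H →L[ℂ] H) (hJsa : IsSelfAdjoint J) (hJ2 : J ∘L J = 1)
    (T : H →L[ℂ] H) (hTsa : IsSelfAdjoint T) (hTnorm : ‖T‖ ≤ 1)
    (hanti : J ∘L T = -(T ∘L J)) :
    (1 + T).IsPositive ∧ (1 - T).IsPositive ∧
    ∀ S₁ S₂ : H →L[ℂ] H, S₁.IsPositive → S₂.IsPositive →
      S₁ ∘L S₁ = 1 + T → S₂ ∘L S₂ = 1 - T → J ∘L S₁ = S₂ ∘L J := by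
  have hplus : 0 ≤ 1 + T := hTsa.one_add_nonneg_of_norm_le_one hTnorm
  have hminus : 0 ≤ 1 - T := hTsa.one_sub_nonneg_of_norm_le_one hTnorm
  refine ⟨(ContinuousLinearMap.nonneg_iff_isPositive _).mp hplus,
    (ContinuousLinearMap.nonneg_iff_isPositive _).mp hminus,
    fun S₁ S₂ hS₁ hS₂ hS₁sq hS₂sq => ?_⟩
  obtain rfl : CFC.sqrt (1 + T) = S₁ :=
    CFC.sqrt_unique hS₁sq ((ContinuousLinearMap.nonneg_iff_isPositive _).mpr hS₁)
  obtain rfl : CFC.sqrt (1 - T) = S₂ :=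
    CFC.sqrt_unique hS₂sq ((ContinuousLinearMap.nonneg_iff_isPositive _).mpr hS₂)
  exact hJsa.mul_sqrt_one_add_eq_sqrt_one_sub_mul hJ2 hanti hplus
end

section
/- Let T : ℋ → ℋ be a bounded self-adjoint operator with ‖T‖ ≤ 1 and J T = −T J, and let D be a closed subspace of ℋ with J(D) = D. Let Q₁ and Q₂ be the orthogonal projections onto the orthogonal complements of √(I+T)(D) and √(I−T)(D), respectively. Then J Q₁ = Q₂ J, and the operators T_μ := T − √(I+T) Q₁ √(I+T) and T_M := T + √(I−T) Q₂ √(I−T) satisfy J T_μ = −T_M J. -/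
/-!
Conjugation by the unitary involution `J` sends `T` to `-T`, hence `I + T` to `I - T`; as it
preserves positivity, uniqueness of positive square roots gives `J √(I+T) J = √(I-T)`. Since
`J D = D`, `J` maps `√(I+T) D` onto `√(I-T) D` and, being unitary, maps orthogonal complements to
orthogonal complements, so `J Q₁ J` is the orthogonal projection `Q₂`. The identity
`J T_μ = -T_M J` then follows by moving `J` through each factor of `T - √(I+T) Q₁ √(I+T)`.
-/

open ContinuousLinearMap

section Unitary

variable {𝕜 H : Type*} [RCLike 𝕜] [NormedAddCommGroup H] [InnerProductSpace 𝕜 H] [CompleteSpace H]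

lemma Unitary.orthogonal_map (u : unitary (H →L[𝕜] H)) (K : Submodule 𝕜 H) :
    (K.map (u : H →ₗ[𝕜] H))ᗮ = Kᗮ.map (u : H →ₗ[𝕜] H) :=
  (Submodule.map_orthogonal_equiv K (Unitary.linearIsometryEquiv u)).symm

lemma Unitary.range_conj (u : unitary (H →L[𝕜] H)) (P : H →L[𝕜] H) :
    LinearMap.range ((u * P * star (u : H →L[𝕜] H) : H →L[𝕜] H) : H →ₗ[𝕜] H) =
      (LinearMap.range (P : H →ₗ[𝕜] H)).map (u : H →ₗ[𝕜] H) := by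
  have hsurj : LinearMap.range ((star (u : H →L[𝕜] H) : H →L[𝕜] H) : H →ₗ[𝕜] H) = ⊤ :=
    LinearMap.range_eq_top.mpr (Unitary.linearIsometryEquiv (star u)).surjective
  rw [mul_def, mul_def, toLinearMap_comp, toLinearMap_comp,
    LinearMap.range_comp_of_range_eq_top _ hsurj, LinearMap.range_comp]

lemma IsStarProjection.conj_unitary_eq_iff {P Q : H →L[𝕜] H} (hP : IsStarProjection P)
    (hQ : IsStarProjection Q) (u : unitary (H →L[𝕜] H)) :
    u * P * star (u : H →L[𝕜] H) = Q ↔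
      LinearMap.range (Q : H →ₗ[𝕜] H) = (LinearMap.range (P : H →ₗ[𝕜] H)).map (u : H →ₗ[𝕜] H) := by
  have h := (hP.map (Unitary.conjStarAlgAut 𝕜 _ u)).ext_iff hQ
  rw [Unitary.conjStarAlgAut_apply, Unitary.range_conj] at h
  rw [h, eq_comm]

end Unitary

lemma ContinuousLinearMap.IsPositive.conj_unitary_eq_of_mul_self_eq
    {H : Type*} [NormedAddCommGroup H] [InnerProductSpace ℂ H] [CompleteSpace H]
    {S R : H →L[ℂ] H} (hS : S.IsPositive) (hR : R.IsPositive) (u : unitary (H →L[ℂ] H))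
    (h : R * R = u * (S * S) * star (u : H →L[ℂ] H)) :
    u * S * star (u : H →L[ℂ] H) = R := by
  have huS : (u * S * star (u : H →L[ℂ] H)).IsPositive := by
    simpa [star_eq_adjoint, mul_def, comp_assoc] using hS.conj_adjoint (u : H →L[ℂ] H)
  rw [← CFC.mul_self_eq_mul_self_iff _ _ ((nonneg_iff_isPositive _).mpr huS)
    ((nonneg_iff_isPositive _).mpr hR), h]
  simp only [mul_assoc]
  rw [← mul_assoc (star (u : H →L[ℂ] H)) u, Unitary.star_mul_self_of_mem u.2, one_mul]

lemma IsSelfAdjoint.mem_unitary_of_mul_self_eq_one {R : Type*} [Monoid R] [StarMul R] {J : R}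
    (hJ : IsSelfAdjoint J) (h : J * J = 1) : J ∈ unitary R :=
  Unitary.mem_iff.mpr ⟨by rw [hJ.star_eq, h], by rw [hJ.star_eq, h]⟩

theorem stmt_8_general
    {H : Type*} [NormedAddCommGroup H] [InnerProductSpace ℂ H] [CompleteSpace H]
    (J : H →L[ℂ] H) (hJsa : IsSelfAdjoint J) (hJ2 : J ∘L J = 1)
    (T : H →L[ℂ] H)
    (hanti : J ∘L T = -(T ∘L J))
    (D : Submodule ℂ H)
    (hJD : D.map J.toLinearMap = D)
    (S₁ S₂ : H →L[ℂ] H) (hS₁pos : S₁.IsPositive) (hS₂pos : S₂.IsPositive)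
    (hS₁sq : S₁ ∘L S₁ = 1 + T) (hS₂sq : S₂ ∘L S₂ = 1 - T)
    (Q₁ Q₂ : H →L[ℂ] H)
    (hQ₁sa : IsSelfAdjoint Q₁) (hQ₁idem : Q₁ ∘L Q₁ = Q₁)
    (hQ₁range : LinearMap.range (Q₁ : H →ₗ[ℂ] H) = (D.map S₁.toLinearMap)ᗮ)
    (hQ₂sa : IsSelfAdjoint Q₂) (hQ₂idem : Q₂ ∘L Q₂ = Q₂)
    (hQ₂range : LinearMap.range (Q₂ : H →ₗ[ℂ] H) = (D.map S₂.toLinearMap)ᗮ) :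
    J ∘L Q₁ = Q₂ ∘L J ∧
    J ∘L (T - S₁ ∘L Q₁ ∘L S₁) = -((T + S₂ ∘L Q₂ ∘L S₂) ∘L J) := by
  change J * J = 1 at hJ2
  change J * T = -(T * J) at hanti
  change S₁ * S₁ = 1 + T at hS₁sq
  change S₂ * S₂ = 1 - T at hS₂sq
  let u : unitary (H →L[ℂ] H) := ⟨J, hJsa.mem_unitary_of_mul_self_eq_one hJ2⟩
  have hu : star (u : H →L[ℂ] H) = J := hJsa.star_eq
  have intertwine {A B : H →L[ℂ] H} (h : u * A * star (u : H →L[ℂ] H) = B) : J * A = B * J := by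
    rw [← h, hu, mul_assoc _ J, hJ2, mul_one]
  have hJTJ : 1 - T = J * (1 + T) * J := by
    rw [mul_add, add_mul, mul_one, hJ2, hanti, neg_mul, mul_assoc, hJ2, mul_one, sub_eq_add_neg]
  have hS : J * S₁ = S₂ * J := intertwine <|
    hS₁pos.conj_unitary_eq_of_mul_self_eq hS₂pos u (by rw [hS₂sq, hS₁sq, hu, hJTJ])
  have hD : D.map (S₂ : H →ₗ[ℂ] H) = (D.map (S₁ : H →ₗ[ℂ] H)).map (J : H →ₗ[ℂ] H) := by
    rw [← Submodule.map_comp, ← toLinearMap_comp, ← mul_def, hS, mul_def, toLinearMap_comp,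
      Submodule.map_comp, hJD]
  have hQ : J * Q₁ = Q₂ * J := intertwine <|
    (IsStarProjection.conj_unitary_eq_iff ⟨hQ₁idem, hQ₁sa⟩ ⟨hQ₂idem, hQ₂sa⟩ u).mpr
      (by rw [hQ₂range, hQ₁range, ← Unitary.orthogonal_map, hD])
  refine ⟨hQ, ?_⟩
  change J * (T - S₁ * Q₁ * S₁) = -((T + S₂ * Q₂ * S₂) * J)
  rw [mul_sub, hanti, ← mul_assoc, ← mul_assoc, hS, mul_assoc S₂, hQ, mul_assoc, mul_assoc, hS]
  noncomm_ring

/-- With `S₁ = √(I+T)`, `S₂ = √(I−T)` and `Q₁, Q₂` the orthogonal projections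
onto the orthogonal complements of `S₁(D)` and `S₂(D)` respectively, one has `J Q₁ = Q₂ J` and
the hard and soft extensions `T_μ = T − S₁Q₁S₁`, `T_M = T + S₂Q₂S₂` satisfy `J T_μ = −T_M J`. -/
theorem stmt_8
    {H : Type*} [NormedAddCommGroup H] [InnerProductSpace ℂ H] [CompleteSpace H]
    (J : H →L[ℂ] H) (hJsa : IsSelfAdjoint J) (hJ2 : J ∘L J = 1)
    (T : H →L[ℂ] H) (hTsa : IsSelfAdjoint T) (hTnorm : ‖T‖ ≤ 1)
    (hanti : J ∘L T = -(T ∘L J))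
    (D : Submodule ℂ H) (hDc : IsClosed (D : Set H))
    (hJD : D.map J.toLinearMap = D)
    (S₁ S₂ : H →L[ℂ] H) (hS₁pos : S₁.IsPositive) (hS₂pos : S₂.IsPositive)
    (hS₁sq : S₁ ∘L S₁ = 1 + T) (hS₂sq : S₂ ∘L S₂ = 1 - T)
    (Q₁ Q₂ : H →L[ℂ] H)
    (hQ₁sa : IsSelfAdjoint Q₁) (hQ₁idem : Q₁ ∘L Q₁ = Q₁)
    (hQ₁range : LinearMap.range (Q₁ : H →ₗ[ℂ] H) = (D.map S₁.toLinearMap)ᗮ)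
    (hQ₂sa : IsSelfAdjoint Q₂) (hQ₂idem : Q₂ ∘L Q₂ = Q₂)
    (hQ₂range : LinearMap.range (Q₂ : H →ₗ[ℂ] H) = (D.map S₂.toLinearMap)ᗮ) :
    J ∘L Q₁ = Q₂ ∘L J ∧
    J ∘L (T - S₁ ∘L Q₁ ∘L S₁) = -((T + S₂ ∘L Q₂ ∘L S₂) ∘L J) :=
  stmt_8_general J hJsa hJ2 T hanti D hJD S₁ S₂ hS₁pos hS₂pos hS₁sq hS₂sq Q₁ Q₂ hQ₁sa hQ₁idem
    hQ₁range hQ₂sa hQ₂idem hQ₂range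
end

section
/- Let T_μ and T_M be bounded self-adjoint operators on ℋ with ‖T_μ‖ ≤ 1, ‖T_M‖ ≤ 1, T_μ ≤ T_M (i.e. T_M − T_μ is positive), and J T_μ J = −T_M. Let S := √(T_M − T_μ), let 𝔐 be the closure of the range of T_M − T_μ, and let P be the orthogonal projection onto 𝔐. Let X be a bounded self-adjoint operator with 0 ≤ X ≤ I and X P = X = P X. Then the operator T := T_μ + S X S satisfies J T = −T J if and only if X + J X J = P. -/
/-!
Since `J Tμ J = -T_M` and `J² = I`, the involution `J` commutes with `T_M - Tμ = S²`, hence with its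
square root `S` and with the projection `P` onto `cl (ran S²) = cl (ran S)`. As `S P = S`, this gives
`J T J + T = S (X + J X J - P) S`, and `J` anticommutes with `T` exactly when this vanishes. Finally
`S Y S = 0` forces `Y = 0` when `Y = P Y = Y P`: `S Y` vanishes on `cl (ran S) = ran P`, so
`ran Y ⊆ ker S ∩ ran P = ker S ∩ (ker S)ᗮ = 0`.
-/

open ContinuousLinearMap

section Algebra

variable {R : Type*}

theorem commute_of_conj_eq [Monoid R] {J a : R} (hJ : J * J = 1) (h : J * a * J = a) :
    Commute J a :=
  calc J * a = J * a * (J * J) := by rw [hJ, mul_one]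
    _ = a * J := by rw [← mul_assoc, h]

theorem commute_sub_of_conj_eq_neg [Ring R] {J a b : R} (hJ : J * J = 1) (h : J * a * J = -b) :
    Commute J (b - a) := by
  refine commute_of_conj_eq hJ ?_
  have hb : J * b * J = -a := by
    calc J * b * J = -(J * (J * a * J) * J) := by rw [h]; noncomm_ring
      _ = -((J * J) * a * (J * J)) := by noncomm_ring
      _ = -a := by rw [hJ, one_mul, mul_one]
  rw [mul_sub, sub_mul, hb, h]
  abel

theorem mul_eq_neg_mul_iff_conj_add_eq_zero [Ring R] {J a : R} (hJ : J * J = 1) :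
    J * a = -(a * J) ↔ J * a * J + a = 0 := by
  constructor
  · intro h
    rw [h, neg_mul, mul_assoc, hJ, mul_one, neg_add_cancel]
  · intro h
    calc J * a = J * a * J * J := by rw [mul_assoc _ J, hJ, mul_one]
      _ = -(a * J) := by rw [eq_neg_of_add_eq_zero_left h, neg_mul]

theorem conj_add_self_eq [Ring R] {J s p x tmu tM : R} (hJs : Commute J s)
    (hJmu : J * tmu * J = -tM) (hss : s * s = tM - tmu) (hsp : s * p = s) :
    J * (tmu + s * x * s) * J + (tmu + s * x * s) = s * (x + J * x * J - p) * s := by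
  have hconj : J * (s * x * s) * J = s * (J * x * J) * s := by
    calc J * (s * x * s) * J = (J * s) * x * (s * J) := by noncomm_ring
      _ = (s * J) * x * (J * s) := by rw [hJs.eq, hJs.symm.eq]
      _ = s * (J * x * J) * s := by noncomm_ring
  calc J * (tmu + s * x * s) * J + (tmu + s * x * s)
      = J * tmu * J + J * (s * x * s) * J + tmu + s * x * s := by noncomm_ring
    _ = s * x * s + s * (J * x * J) * s - s * s := by rw [hJmu, hconj, hss]; abel
    _ = s * (x + J * x * J - p) * s := by rw [mul_sub, sub_mul, hsp]; noncomm_ring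

theorem Commute.mul_add_conj_sub_eq [Ring R] {J p x : R} (hJp : Commute J p) (hp : p * p = p)
    (hpx : p * x = x) : p * (x + J * x * J - p) = x + J * x * J - p := by
  have : p * (J * x * J) = J * x * J := by
    rw [← mul_assoc, ← mul_assoc, ← hJp.eq, mul_assoc J p, hpx]
  rw [mul_sub, mul_add, hpx, this, hp]

theorem Commute.add_conj_sub_mul_eq [Ring R] {J p x : R} (hJp : Commute J p) (hp : p * p = p)
    (hxp : x * p = x) : (x + J * x * J - p) * p = x + J * x * J - p := by
  have : J * x * J * p = J * x * J := by
    rw [mul_assoc _ J, hJp.eq, ← mul_assoc, mul_assoc J x, hxp]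
  rw [sub_mul, add_mul, hxp, this, hp]

theorem commute_of_mul_mul_eq_mul [Semiring R] [StarRing R] {J p : R} (hJ : IsSelfAdjoint J)
    (hp : IsSelfAdjoint p) (h : p * J * p = J * p) : Commute J p := by
  have h' : p * J * p = p * J := by
    simpa only [star_mul, hJ.star_eq, hp.star_eq, mul_assoc] using congrArg star h
  exact h.symm.trans h'

end Algebra

theorem Commute.of_mul_self {A : Type*} [CStarAlgebra A] [PartialOrder A] [StarOrderedRing A]
    {a b : A} (ha : 0 ≤ a) (h : Commute b (a * a)) : Commute b a := by
  rw [← CFC.sqrt_mul_self a ha, CFC.sqrt_eq_cfc]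
  exact (h.symm.cfc_nnreal _).symm

section Operator

variable {𝕜 E : Type*} [RCLike 𝕜] [NormedAddCommGroup E] [InnerProductSpace 𝕜 E]

theorem ContinuousLinearMap.mul_eq_self_of_range_le {p a : E →L[𝕜] E} (hp : p * p = p)
    (ha : (a : E →ₗ[𝕜] E).range ≤ (p : E →ₗ[𝕜] E).range) : p * a = a := by
  ext x
  obtain ⟨y, hy⟩ := ha ⟨x, rfl⟩
  simp only [coe_coe] at hy
  rw [mul_apply_eq_comp, ← hy, ← mul_apply_eq_comp, hp]

theorem ContinuousLinearMap.mul_eq_zero_of_mul_eq_zero_of_range_le {a s p : E →L[𝕜] E}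
    (has : a * s = 0) (hp : (p : E →ₗ[𝕜] E).range ≤ (s : E →ₗ[𝕜] E).range.topologicalClosure) :
    a * p = 0 := by
  have hs : (s : E →ₗ[𝕜] E).range ≤ (a : E →ₗ[𝕜] E).ker := by
    rintro _ ⟨x, rfl⟩
    simpa using congrArg (· x) has
  have hp' := hp.trans (Submodule.topologicalClosure_minimal _ hs a.isClosed_ker)
  ext x
  simpa using hp' ⟨x, rfl⟩

variable [CompleteSpace E]

theorem Commute.of_range_eq_topologicalClosure_range {J s p : E →L[𝕜] E}
    (hJ : IsSelfAdjoint J) (hp : IsSelfAdjoint p) (hpp : p * p = p)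
    (hps : (p : E →ₗ[𝕜] E).range = (s : E →ₗ[𝕜] E).range.topologicalClosure)
    (hJs : Commute J s) : Commute J p := by
  have hs : p * s = s :=
    mul_eq_self_of_range_le hpp ((Submodule.le_topologicalClosure _).trans hps.ge)
  refine commute_of_mul_mul_eq_mul hJ hp (sub_eq_zero.mp ?_)
  have hvanish : (p * J * p - J * p) * s = 0 := by
    simp only [sub_mul, mul_assoc, hs]
    rw [hJs.eq, ← mul_assoc, hs, sub_self]
  simpa only [sub_mul, mul_assoc, hpp] using
    mul_eq_zero_of_mul_eq_zero_of_range_le hvanish hps.le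

theorem IsSelfAdjoint.topologicalClosure_range_mul_self {s : E →L[𝕜] E} (hs : IsSelfAdjoint s) :
    ((s * s : E →L[𝕜] E) : E →ₗ[𝕜] E).range.topologicalClosure =
      (s : E →ₗ[𝕜] E).range.topologicalClosure := by
  have := congrArg Submodule.orthogonal (ker_adjoint_comp_self s)
  rwa [orthogonal_ker, orthogonal_ker, adjoint_comp, adjoint_adjoint, hs.adjoint_eq] at this

theorem IsSelfAdjoint.eq_zero_of_mul_mul_eq_zero {s p y : E →L[𝕜] E} (hs : IsSelfAdjoint s)
    (hp : (p : E →ₗ[𝕜] E).range ≤ (s : E →ₗ[𝕜] E).range.topologicalClosure)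
    (hpy : p * y = y) (hyp : y * p = y) (h : s * y * s = 0) : y = 0 := by
  have hsy : s * y = 0 := by
    rw [← hyp, ← mul_assoc]
    exact mul_eq_zero_of_mul_eq_zero_of_range_le h hp
  ext x
  have hker : y x ∈ (s : E →ₗ[𝕜] E).ker := by simpa using congrArg (· x) hsy
  have hperp : y x ∈ (s : E →ₗ[𝕜] E).kerᗮ := by
    rw [orthogonal_ker, hs.adjoint_eq, ← hpy]
    exact hp ⟨y x, rfl⟩
  simpa using (Submodule.inf_orthogonal_eq_bot _).le ⟨hker, hperp⟩

end Operator

theorem stmt_10_general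
    {H : Type*} [NormedAddCommGroup H] [InnerProductSpace ℂ H] [CompleteSpace H]
    (J : H →L[ℂ] H) (hJsa : IsSelfAdjoint J) (hJ2 : J ∘L J = 1)
    (Tmu TM : H →L[ℂ] H)
    (hJmu : J ∘L Tmu ∘L J = -TM)
    (S : H →L[ℂ] H) (hSpos : S.IsPositive) (hSsq : S ∘L S = TM - Tmu)
    (P : H →L[ℂ] H) (hPsa : IsSelfAdjoint P) (hPidem : P ∘L P = P)
    (hPrange : LinearMap.range (P : H →ₗ[ℂ] H) = (LinearMap.range ((TM - Tmu : H →L[ℂ] H) : H →ₗ[ℂ] H)).topologicalClosure)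
    (X : H →L[ℂ] H)
    (hXP : X ∘L P = X) (hPX : P ∘L X = X) :
    J ∘L (Tmu + S ∘L X ∘L S) = -((Tmu + S ∘L X ∘L S) ∘L J) ↔
      X + J ∘L X ∘L J = P := by
  simp only [← mul_def, ← mul_assoc] at hJ2 hJmu hSsq hPidem hXP hPX ⊢
  have hSsa : IsSelfAdjoint S := hSpos.isSelfAdjoint
  have hJS : Commute J S := Commute.of_mul_self ((nonneg_iff_isPositive S).mpr hSpos)
    (hSsq ▸ commute_sub_of_conj_eq_neg hJ2 hJmu)
  have hPS : (P : H →ₗ[ℂ] H).range = (S : H →ₗ[ℂ] H).range.topologicalClosure := by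
    rw [hPrange, ← hSsq, hSsa.topologicalClosure_range_mul_self]
  have hSP : S * P = S := by
    have := congrArg star (mul_eq_self_of_range_le hPidem
      ((Submodule.le_topologicalClosure _).trans hPS.ge))
    rwa [star_mul, hPsa.star_eq, hSsa.star_eq] at this
  have hJP : Commute J P := hJS.of_range_eq_topologicalClosure_range hJsa hPsa hPidem hPS
  rw [mul_eq_neg_mul_iff_conj_add_eq_zero hJ2, conj_add_self_eq hJS hJmu hSsq hSP,
    ← sub_eq_zero (b := P)]
  exact ⟨hSsa.eq_zero_of_mul_mul_eq_zero hPS.le (hJP.mul_add_conj_sub_eq hPidem hPX)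
    (hJP.add_conj_sub_mul_eq hPidem hXP), fun h => by rw [h, mul_zero, zero_mul]⟩

/-- In the Krein–Arlinskii parametrization `T = T_μ + S X S`
(`S = √(T_M − T_μ)`, `0 ≤ X ≤ I` supported on `𝔐 = cl (range (T_M − T_μ))` with orthogonal
projection `P` onto `𝔐`), the operator `T` anticommutes with `J` iff `X + J X J = P`. -/
theorem stmt_10
    {H : Type*} [NormedAddCommGroup H] [InnerProductSpace ℂ H] [CompleteSpace H]
    (J : H →L[ℂ] H) (hJsa : IsSelfAdjoint J) (hJ2 : J ∘L J = 1)
    (Tmu TM : H →L[ℂ] H)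
    (hmusa : IsSelfAdjoint Tmu) (hMsa : IsSelfAdjoint TM)
    (hmunorm : ‖Tmu‖ ≤ 1) (hMnorm : ‖TM‖ ≤ 1)
    (hle : (TM - Tmu).IsPositive)
    (hJmu : J ∘L Tmu ∘L J = -TM)
    (S : H →L[ℂ] H) (hSpos : S.IsPositive) (hSsq : S ∘L S = TM - Tmu)
    (P : H →L[ℂ] H) (hPsa : IsSelfAdjoint P) (hPidem : P ∘L P = P)
    (hPrange : LinearMap.range (P : H →ₗ[ℂ] H) = (LinearMap.range ((TM - Tmu : H →L[ℂ] H) : H →ₗ[ℂ] H)).topologicalClosure)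
    (X : H →L[ℂ] H) (hXsa : IsSelfAdjoint X)
    (hXpos : X.IsPositive) (hXcontr : (1 - X).IsPositive)
    (hXP : X ∘L P = X) (hPX : P ∘L X = X) :
    J ∘L (Tmu + S ∘L X ∘L S) = -((Tmu + S ∘L X ∘L S) ∘L J) ↔
      X + J ∘L X ∘L J = P :=
  stmt_10_general J hJsa hJ2 Tmu TM hJmu S hSpos hSsq P hPsa hPidem hPrange X hXP hPX
end

section
/- Let D = M₊ ⊕ M₋ be a closed subspace of ℋ, where M₊ ⊆ ℋ₊ and M₋ ⊆ ℋ₋ are closed subspaces, let T₀ : D → ℋ be a symmetric linear strong contraction satisfying J T₀ f = −T₀ J f for all f ∈ D, and assume that 𝒟 := (I + T₀)(D) is dense in ℋ. Then: (a) I + T₀ is injective on D, so the operator G₀ with domain 𝒟 given by G₀((I+T₀)x) := (I−T₀)x for x ∈ D is well defined; (b) G₀ is a densely defined symmetric operator with closed graph; (c) G₀ is positive, i.e. ⟨G₀ f, f⟩ > 0 for every nonzero f ∈ 𝒟; (d) G₀ is injective, and J G₀ f = G₀^{-1} J f for every f ∈ 𝒟 (in particular J maps 𝒟 onto the range of G₀).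 -/
/-!
`G₀` is the Cayley transform of `T₀`: its graph is the image of the graph of `T₀|D` under the
invertible map `(x, y) ↦ (x + y, x - y)`, which gives the closed graph since a contraction on the
closed subspace `D` is continuous there. Well-definedness and injectivity of `G₀` hold because a
strong contraction has neither `-1` nor `1` as an eigenvalue, and positivity is
`re ⟪x - T₀ x, x + T₀ x⟫ = ‖x‖² - ‖T₀ x‖² > 0`. The relation between `J`, `G₀` and `G₀⁻¹` is
`J (I ± T₀) = (I ∓ T₀) J`, from the anticommutation.
-/

open RCLike

section StrongContraction

variable {R E : Type*} [Ring R] [NormedAddCommGroup E] [Module R E]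

def IsStrongContractionOn (T : E →ₗ[R] E) (D : Submodule R E) : Prop :=
  ∀ f ∈ D, f ≠ 0 → ‖T f‖ < ‖f‖

namespace IsStrongContractionOn

variable {T : E →ₗ[R] E} {D : Submodule R E}

theorem eq_zero_of_norm_map_eq (hT : IsStrongContractionOn T D) {z : E} (hz : z ∈ D)
    (h : ‖T z‖ = ‖z‖) : z = 0 := by
  by_contra hne
  exact (hT z hz hne).ne h

theorem norm_map_le (hT : IsStrongContractionOn T D) {z : E} (hz : z ∈ D) : ‖T z‖ ≤ ‖z‖ := by
  rcases eq_or_ne z 0 with rfl | hne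
  · simp
  · exact (hT z hz hne).le

theorem lipschitzOnWith (hT : IsStrongContractionOn T D) : LipschitzOnWith 1 T D :=
  LipschitzOnWith.of_dist_le_mul fun x hx y hy => by
    simpa [dist_eq_norm, ← map_sub] using hT.norm_map_le (D.sub_mem hx hy)

theorem injOn_add_map (hT : IsStrongContractionOn T D) : Set.InjOn (fun x => x + T x) D := by
  intro x hx y hy h
  have hTxy : T (x - y) = -(x - y) := by
    simp only at h
    rw [map_sub, neg_sub, sub_eq_sub_iff_add_eq_add, add_comm, h]
  exact sub_eq_zero.mp (hT.eq_zero_of_norm_map_eq (D.sub_mem hx hy) (by rw [hTxy, norm_neg]))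

theorem injOn_sub_map (hT : IsStrongContractionOn T D) : Set.InjOn (fun x => x - T x) D := by
  intro x hx y hy h
  have hTxy : T (x - y) = x - y := by
    simp only at h
    rw [map_sub, sub_eq_sub_iff_add_eq_add, add_comm, ← sub_eq_sub_iff_add_eq_add, h]
  exact sub_eq_zero.mp (hT.eq_zero_of_norm_map_eq (D.sub_mem hx hy) (by rw [hTxy]))

end IsStrongContractionOn

end StrongContraction

section InnerProduct

variable {𝕜 E : Type*} [RCLike 𝕜] [NormedAddCommGroup E] [InnerProductSpace 𝕜 E]

theorem inner_sub_add_eq_inner_add_sub {x y u v : E} (h : inner 𝕜 u y = inner 𝕜 x v) :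
    inner 𝕜 (x - u) (y + v) = inner 𝕜 (x + u) (y - v) := by
  simp only [inner_sub_left, inner_add_left, inner_add_right, inner_sub_right, h]
  ring

theorem re_inner_sub_add (x u : E) : re (inner 𝕜 (x - u) (x + u)) = ‖x‖ ^ 2 - ‖u‖ ^ 2 := by
  simp only [inner_sub_left, inner_add_right, map_add, map_sub, inner_re_symm (𝕜 := 𝕜) u x,
    ← norm_sq_eq_re_inner (𝕜 := 𝕜)]
  ring

theorem IsStrongContractionOn.re_inner_sub_map_add_map_pos {T : E →ₗ[𝕜] E} {D : Submodule 𝕜 E}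
    (hT : IsStrongContractionOn T D) {x : E} (hx : x ∈ D) (hne : x + T x ≠ 0) :
    0 < re (inner 𝕜 (x - T x) (x + T x)) := by
  have hx0 : x ≠ 0 := by rintro rfl; simp at hne
  rw [re_inner_sub_add, sub_pos]
  exact pow_lt_pow_left₀ (hT x hx hx0) (norm_nonneg _) two_ne_zero

end InnerProduct

theorem isClosed_setOf_add_sub_of_continuousOn {E : Type*} [NormedAddCommGroup E]
    [NormedSpace ℝ E] {T : E → E} {s : Set E} (hs : IsClosed s) (hT : ContinuousOn T s) :
    IsClosed {p : E × E | ∃ x ∈ s, p.1 = x + T x ∧ p.2 = x - T x} := by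
  set half : E × E → E := fun p => (2 : ℝ)⁻¹ • (p.1 + p.2)
  have hhalf : Continuous half := by fun_prop
  have key : {p : E × E | ∃ x ∈ s, p.1 = x + T x ∧ p.2 = x - T x} =
      half ⁻¹' s ∩ (fun p => T (half p) - (2 : ℝ)⁻¹ • (p.1 - p.2)) ⁻¹' {0} := by
    ext ⟨a, b⟩
    simp only [Set.mem_ofPred_eq, Set.mem_inter_iff, Set.mem_preimage, Set.mem_singleton_iff,
      sub_eq_zero, half]
    constructor
    · rintro ⟨x, hx, rfl, rfl⟩
      have hmid : (2 : ℝ)⁻¹ • (x + T x + (x - T x)) = x := by module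
      exact ⟨by rwa [hmid], by rw [hmid]; module⟩
    · rintro ⟨hmem, hmap⟩
      refine ⟨_, hmem, ?_, ?_⟩ <;> rw [hmap] <;> module
  rw [key]
  have hcont : ContinuousOn (fun p : E × E => T (half p) - (2 : ℝ)⁻¹ • (p.1 - p.2)) (half ⁻¹' s) :=
    (hT.comp hhalf.continuousOn fun _ hp => hp).sub (by fun_prop)
  exact hcont.preimage_isClosed_of_isClosed (hs.preimage hhalf) isClosed_singleton

theorem map_add_map_of_anticomm {R E : Type*} [Ring R] [AddCommGroup E] [Module R E]
    {J T : E →ₗ[R] E} {x : E} (h : J (T x) = -T (J x)) :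
    J (x + T x) = J x - T (J x) ∧ J (x - T x) = J x + T (J x) := by
  rw [map_add, map_sub, h]
  constructor <;> abel

theorem stmt_12_general
    {H : Type*} [NormedAddCommGroup H] [InnerProductSpace ℂ H]
    (J : H →L[ℂ] H) (hJ2 : J ∘L J = 1)
    (D : Submodule ℂ H) (hDc : IsClosed (D : Set H))
    (T₀ : H →ₗ[ℂ] H)
    (hsc : ∀ f ∈ D, f ≠ 0 → ‖T₀ f‖ < ‖f‖)
    (hJD : ∀ f ∈ D, J f ∈ D)
    (hanti : ∀ f ∈ D, J (T₀ f) = -T₀ (J f))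
    (hsymm : ∀ f ∈ D, ∀ g ∈ D, (inner ℂ (T₀ f) g : ℂ) = inner ℂ f (T₀ g)) :
    -- (a) `I + T₀` is injective on `D`, so `G₀` is well defined
    (∀ x ∈ D, ∀ y ∈ D, x + T₀ x = y + T₀ y → x = y) ∧
    -- (b) `G₀` is symmetric and has closed graph
    (∀ x ∈ D, ∀ y ∈ D,
      (inner ℂ (x - T₀ x) (y + T₀ y) : ℂ) = inner ℂ (x + T₀ x) (y - T₀ y)) ∧
    IsClosed {p : H × H | ∃ x ∈ D, p.1 = x + T₀ x ∧ p.2 = x - T₀ x} ∧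
    -- (c) `G₀` is positive
    (∀ x ∈ D, x + T₀ x ≠ 0 → 0 < (inner ℂ (x - T₀ x) (x + T₀ x) : ℂ).re) ∧
    -- (d) `G₀` is injective and `J G₀ f = G₀⁻¹ J f` for all `f ∈ 𝒟`
    (∀ x ∈ D, ∀ y ∈ D, x - T₀ x = y - T₀ y → x = y) ∧
    (∀ x ∈ D, ∃ y ∈ D, J (x + T₀ x) = y - T₀ y ∧ J (x - T₀ x) = y + T₀ y) ∧
    (∀ y ∈ D, ∃ x ∈ D, J (x + T₀ x) = y - T₀ y) := by
  have hT : IsStrongContractionOn T₀ D := hsc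
  have hJJ (y : H) : J (J y) = y := by simpa using DFunLike.congr_fun hJ2 y
  have hJG (x : H) (hx : x ∈ D) :
      J (x + T₀ x) = J x - T₀ (J x) ∧ J (x - T₀ x) = J x + T₀ (J x) :=
    map_add_map_of_anticomm (hanti x hx)
  refine ⟨fun x hx y hy h => hT.injOn_add_map hx hy h,
    fun x hx y hy => inner_sub_add_eq_inner_add_sub (hsymm x hx y hy),
    isClosed_setOf_add_sub_of_continuousOn hDc hT.lipschitzOnWith.continuousOn,
    fun x hx => hT.re_inner_sub_map_add_map_pos hx,
    fun x hx y hy h => hT.injOn_sub_map hx hy h,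
    fun x hx => ⟨J x, hJD x hx, hJG x hx⟩,
    fun y hy => ⟨J y, hJD y hy, ?_⟩⟩
  simpa only [hJJ] using (hJG (J y) (hJD y hy)).1

/-- Properties of the Cayley transform `G₀((I+T₀)x) = (I−T₀)x` of a symmetric
strong contraction `T₀` on `D = M₊ ⊕ M₋` anticommuting with `J`, when `𝒟 = (I+T₀)D` is dense:
well-definedness (injectivity of `I+T₀` on `D`), symmetry, closed graph, positivity,
injectivity of `G₀`, and the relation `J G₀ f = G₀⁻¹ J f` (in particular `J` maps `𝒟` onto
the range of `G₀`). -/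
theorem stmt_12
    {H : Type*} [NormedAddCommGroup H] [InnerProductSpace ℂ H] [CompleteSpace H]
    (J : H →L[ℂ] H) (hJsa : IsSelfAdjoint J) (hJ2 : J ∘L J = 1)
    (Mp Mm : Submodule ℂ H)
    (hMpc : IsClosed (Mp : Set H)) (hMmc : IsClosed (Mm : Set H))
    (hMp : ∀ x ∈ Mp, J x = x) (hMm : ∀ x ∈ Mm, J x = -x)
    (D : Submodule ℂ H) (hD : D = Mp ⊔ Mm) (hDc : IsClosed (D : Set H))
    (T₀ : H →ₗ[ℂ] H)
    (hsc : ∀ f ∈ D, f ≠ 0 → ‖T₀ f‖ < ‖f‖)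
    (hJD : ∀ f ∈ D, J f ∈ D)
    (hanti : ∀ f ∈ D, J (T₀ f) = -T₀ (J f))
    (hsymm : ∀ f ∈ D, ∀ g ∈ D, (inner ℂ (T₀ f) g : ℂ) = inner ℂ f (T₀ g))
    (hdense : Dense ((fun x => x + T₀ x) '' (D : Set H))) :
    -- (a) `I + T₀` is injective on `D`, so `G₀` is well defined
    (∀ x ∈ D, ∀ y ∈ D, x + T₀ x = y + T₀ y → x = y) ∧
    -- (b) `G₀` is symmetric and has closed graph
    (∀ x ∈ D, ∀ y ∈ D,
      (inner ℂ (x - T₀ x) (y + T₀ y) : ℂ) = inner ℂ (x + T₀ x) (y - T₀ y)) ∧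
    IsClosed {p : H × H | ∃ x ∈ D, p.1 = x + T₀ x ∧ p.2 = x - T₀ x} ∧
    -- (c) `G₀` is positive
    (∀ x ∈ D, x + T₀ x ≠ 0 → 0 < (inner ℂ (x - T₀ x) (x + T₀ x) : ℂ).re) ∧
    -- (d) `G₀` is injective and `J G₀ f = G₀⁻¹ J f` for all `f ∈ 𝒟`
    (∀ x ∈ D, ∀ y ∈ D, x - T₀ x = y - T₀ y → x = y) ∧
    (∀ x ∈ D, ∃ y ∈ D, J (x + T₀ x) = y - T₀ y ∧ J (x - T₀ x) = y + T₀ y) ∧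
    (∀ y ∈ D, ∃ x ∈ D, J (x + T₀ x) = y - T₀ y) :=
  stmt_12_general J hJ2 D hDc T₀ hsc hJD hanti hsymm
end

section
/- Let D = M₊ ⊕ M₋ be a closed subspace of ℋ (M₊ ⊆ ℋ₊, M₋ ⊆ ℋ₋ closed subspaces), let T₀ : D → ℋ be a symmetric linear strong contraction satisfying J T₀ f = −T₀ J f for all f ∈ D, assume 𝒟 := (I + T₀)(D) is dense in ℋ, and let G₀ be the densely defined operator with domain 𝒟 given by G₀((I+T₀)x) := (I−T₀)x. Then the range of I + G₀ equals D, and the kernel of I + G₀* equals the orthogonal complement of D in ℋ, where G₀* denotes the adjoint of the densely defined operator G₀. -/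
/-! Writing `f = x + T₀ x` with `x ∈ D` gives `f + G₀ f = 2x`, so `I + G₀` maps `𝒟` onto `D`.
The kernel of `I + G₀*` is the orthogonal complement of the range of `I + G₀` for any densely
defined `G₀`, which is therefore `Dᗮ`. -/

open scoped InnerProductSpace

namespace LinearPMap

theorem exists_eq_add_and_apply_eq_sub {R E : Type*} [Ring R] [AddCommGroup E] [Module R E]
    {T : E →ₗ[R] E} {D : Submodule R E} {G : E →ₗ.[R] E}
    (hdom : G.domain = D.map (LinearMap.id + T))
    (hval : ∀ x ∈ D, ∀ h : x + T x ∈ G.domain, G ⟨x + T x, h⟩ = x - T x) (f : G.domain) :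
    ∃ x ∈ D, (f : E) = x + T x ∧ G f = x - T x := by
  have hf : (f : E) ∈ D.map (LinearMap.id + T) := hdom ▸ f.2
  obtain ⟨x, hx, hfx⟩ := Submodule.mem_map.mp hf
  replace hfx : x + T x = f := by simpa using hfx
  refine ⟨x, hx, hfx.symm, ?_⟩
  rw [← hval x hx (hfx ▸ f.2)]
  exact congrArg G (Subtype.ext hfx.symm)

theorem range_add_apply_eq {R E : Type*} [DivisionRing R] [CharZero R] [AddCommGroup E]
    [Module R E] {T : E →ₗ[R] E} {D : Submodule R E} {G : E →ₗ.[R] E}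
    (hdom : G.domain = D.map (LinearMap.id + T))
    (hval : ∀ x ∈ D, ∀ h : x + T x ∈ G.domain, G ⟨x + T x, h⟩ = x - T x) :
    Set.range (fun f : G.domain => (f : E) + G f) = D := by
  have hsum : ∀ x : E, x + T x + (x - T x) = (2 : R) • x := fun x => by
    rw [two_smul]; abel
  ext d
  constructor
  · rintro ⟨f, rfl⟩
    obtain ⟨x, hx, hf, hGf⟩ := exists_eq_add_and_apply_eq_sub hdom hval f
    change (f : E) + G f ∈ D
    rw [hf, hGf, hsum]
    exact D.smul_mem _ hx
  · intro hd
    set x := (2 : R)⁻¹ • d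
    have hx : x ∈ D := D.smul_mem _ hd
    have hxdom : x + T x ∈ G.domain := hdom ▸ Submodule.mem_map.mpr ⟨x, hx, rfl⟩
    refine ⟨⟨x + T x, hxdom⟩, ?_⟩
    simp only [hval x hx hxdom, hsum, x, smul_smul]
    norm_num

variable {𝕜 E : Type*} [RCLike 𝕜] [NormedAddCommGroup E] [InnerProductSpace 𝕜 E] [CompleteSpace E]
  {G : E →ₗ.[𝕜] E}

theorem exists_adjoint_apply_eq_neg_iff (hG : Dense (G.domain : Set E)) (g : E) :
    (∃ hg : g ∈ G†.domain, G† ⟨g, hg⟩ = -g) ↔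
      ∀ u ∈ Set.range (fun f : G.domain => (f : E) + G f), ⟪g, u⟫_𝕜 = 0 := by
  simp only [Set.forall_mem_range, inner_add_right, add_eq_zero_iff_neg_eq, ← inner_neg_left]
  constructor
  · rintro ⟨hg, hGg⟩ f
    rw [← hGg]
    exact G.adjoint_isFormalAdjoint hG ⟨g, hg⟩ f
  · intro h
    have hg : g ∈ G†.domain := G.mem_adjoint_domain_of_exists g ⟨-g, h⟩
    exact ⟨hg, G.adjoint_apply_eq hG ⟨g, hg⟩ h⟩

end LinearPMap

theorem stmt_13_general
    {H : Type*} [NormedAddCommGroup H] [InnerProductSpace ℂ H] [CompleteSpace H]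
    (D : Submodule ℂ H)
    (T₀ : H →ₗ[ℂ] H)
    (G₀ : H →ₗ.[ℂ] H)
    (hdom : G₀.domain = D.map (LinearMap.id + T₀))
    (hdense : Dense (G₀.domain : Set H))
    (hval : ∀ x ∈ D, ∀ h : x + T₀ x ∈ G₀.domain, G₀ ⟨x + T₀ x, h⟩ = x - T₀ x) :
    (Set.range (fun f : G₀.domain => (f : H) + G₀ f) = (D : Set H)) ∧
    ({g : H | ∃ hg : g ∈ G₀.adjoint.domain, G₀.adjoint ⟨g, hg⟩ = -g} = (Dᗮ : Set H)) := by
  have hrange := LinearPMap.range_add_apply_eq hdom hval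
  refine ⟨hrange, Set.ext fun g => ?_⟩
  rw [Set.mem_ofPred_eq, LinearPMap.exists_adjoint_apply_eq_neg_iff hdense, hrange,
    SetLike.mem_coe, Submodule.mem_orthogonal']
  rfl

/-- For the Cayley transform `G₀((I+T₀)x) = (I−T₀)x`, a densely defined
operator with domain `𝒟 = (I+T₀)D`, the range of `I + G₀` equals `D`, and the kernel of
`I + G₀*` is the orthogonal complement of `D` in `ℋ`. -/
theorem stmt_13
    {H : Type*} [NormedAddCommGroup H] [InnerProductSpace ℂ H] [CompleteSpace H]
    (J : H →L[ℂ] H) (hJsa : IsSelfAdjoint J) (hJ2 : J ∘L J = 1)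
    (Mp Mm : Submodule ℂ H)
    (hMpc : IsClosed (Mp : Set H)) (hMmc : IsClosed (Mm : Set H))
    (hMp : ∀ x ∈ Mp, J x = x) (hMm : ∀ x ∈ Mm, J x = -x)
    (D : Submodule ℂ H) (hD : D = Mp ⊔ Mm) (hDc : IsClosed (D : Set H))
    (T₀ : H →ₗ[ℂ] H)
    (hsc : ∀ f ∈ D, f ≠ 0 → ‖T₀ f‖ < ‖f‖)
    (hJD : ∀ f ∈ D, J f ∈ D)
    (hanti : ∀ f ∈ D, J (T₀ f) = -T₀ (J f))
    (hsymm : ∀ f ∈ D, ∀ g ∈ D, (inner ℂ (T₀ f) g : ℂ) = inner ℂ f (T₀ g))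
    (G₀ : H →ₗ.[ℂ] H)
    (hdom : G₀.domain = D.map (LinearMap.id + T₀))
    (hdense : Dense (G₀.domain : Set H))
    (hval : ∀ x ∈ D, ∀ h : x + T₀ x ∈ G₀.domain, G₀ ⟨x + T₀ x, h⟩ = x - T₀ x) :
    (Set.range (fun f : G₀.domain => (f : H) + G₀ f) = (D : Set H)) ∧
    ({g : H | ∃ hg : g ∈ G₀.adjoint.domain, G₀.adjoint ⟨g, hg⟩ = -g} = (Dᗮ : Set H)) :=
  stmt_13_general D T₀ G₀ hdom hdense hval
end

section
/- Let 𝔐 be a closed subspace of ℋ with J(𝔐) = 𝔐, let P be the orthogonal projection onto 𝔐, let 𝔐₁ ⊆ 𝔐 be a closed subspace, and let X be the orthogonal projection onto 𝔐₁. Then 𝔐 is the orthogonal direct sum 𝔐 = 𝔐₁ ⊕ J(𝔐₁) (i.e. 𝔐₁ ⟂ J(𝔐₁) and 𝔐₁ + J(𝔐₁) = 𝔐) if and only if X + J X J = P. -/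
/-! With `Y = J X J`, again an orthogonal projection (onto `J 𝔐₁`), orthogonality of `𝔐₁` and
`J 𝔐₁` says exactly `X Y = 0`. A sum of two orthogonal projections is an orthogonal projection
iff their product vanishes, and then it projects onto the sum of their ranges; since an orthogonal
projection is determined by its range, both directions follow. -/

namespace IsStarProjection

variable {R : Type*} [Ring R] [StarRing R] {p q u : R}

theorem add_iff [IsAddTorsionFree R] (hp : IsStarProjection p) (hq : IsStarProjection q) :
    IsStarProjection (p + q) ↔ p * q = 0 := by
  refine ⟨fun hpq ↦ ?_, hp.add hq⟩
  exact hp.isIdempotentElem.mul_eq_zero_of_anticommute <|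
    (hp.isIdempotentElem.add_iff hq.isIdempotentElem).mp hpq.isIdempotentElem

theorem conjugate_of_involution (hu : IsSelfAdjoint u) (hu2 : u * u = 1)
    (hp : IsStarProjection p) : IsStarProjection (u * p * u) where
  isIdempotentElem := by
    rw [IsIdempotentElem, show u * p * u * (u * p * u) = u * p * (u * u) * p * u by noncomm_ring,
      hu2, mul_one, mul_assoc u p p, hp.isIdempotentElem.eq]
  isSelfAdjoint := by simpa [hu.star_eq, mul_assoc] using hp.isSelfAdjoint.conjugate u

end IsStarProjection

theorem LinearMap.range_conjugate_of_involution {R M : Type*} [Semiring R] [AddCommMonoid M]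
    [Module R M] {u : Module.End R M} (hu2 : u * u = 1) (p : Module.End R M) :
    range (u * p * u) = (range p).map u := by
  have hu : Function.Surjective u := fun x ↦ ⟨u x, congr($hu2 x)⟩
  rw [Module.End.mul_eq_comp, range_comp_of_range_eq_top _ (range_eq_top.mpr hu),
    Module.End.mul_eq_comp, range_comp]

section Operators

variable {𝕜 E : Type*} [RCLike 𝕜] [NormedAddCommGroup E] [InnerProductSpace 𝕜 E] [CompleteSpace E]

theorem IsStarProjection.range_add {p q : E →L[𝕜] E} (hp : IsStarProjection p)
    (hq : IsStarProjection q) (hpq : p * q = 0) :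
    LinearMap.range ((p + q : E →L[𝕜] E) : E →ₗ[𝕜] E) =
      LinearMap.range (p : E →ₗ[𝕜] E) ⊔ LinearMap.range (q : E →ₗ[𝕜] E) := by
  have hqp : q * p = 0 := by
    simpa [hp.isSelfAdjoint.star_eq, hq.isSelfAdjoint.star_eq] using congr(star $hpq)
  refine le_antisymm (LinearMap.range_add_le _ _) (sup_le ?_ ?_)
  · rintro - ⟨x, rfl⟩
    have : (p + q) * p = p := by rw [add_mul, hp.isIdempotentElem.eq, hqp, add_zero]
    exact ⟨p x, congr($this x)⟩
  · rintro - ⟨x, rfl⟩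
    have : (p + q) * q = q := by rw [add_mul, hq.isIdempotentElem.eq, hpq, zero_add]
    exact ⟨q x, congr($this x)⟩

theorem IsSelfAdjoint.mul_mul_self_eq_zero_iff {p : E →L[𝕜] E} (hp : IsSelfAdjoint p)
    (T : E →L[𝕜] E) :
    p * T * p = 0 ↔
      ∀ x ∈ LinearMap.range (p : E →ₗ[𝕜] E), ∀ y ∈ LinearMap.range (p : E →ₗ[𝕜] E),
        inner 𝕜 x (T y) = 0 := by
  have hp' : ∀ u v, inner 𝕜 (p u) v = inner 𝕜 u (p v) := fun u v ↦ by
    rw [← ContinuousLinearMap.adjoint_inner_left, hp.adjoint_eq]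
  constructor
  · rintro h - ⟨u, rfl⟩ - ⟨v, rfl⟩
    rw [ContinuousLinearMap.coe_coe, hp']
    simpa using congr(inner 𝕜 u ($h v))
  · intro h
    ext v
    refine ext_inner_left 𝕜 fun u ↦ ?_
    simpa [← hp'] using h _ ⟨u, rfl⟩ _ ⟨v, rfl⟩

end Operators

theorem stmt_15_general
    {H : Type*} [NormedAddCommGroup H] [InnerProductSpace ℂ H] [CompleteSpace H]
    (J : H →L[ℂ] H) (hJsa : IsSelfAdjoint J) (hJ2 : J ∘L J = 1)
    (M : Submodule ℂ H)
    (P : H →L[ℂ] H) (hPsa : IsSelfAdjoint P) (hPidem : P ∘L P = P)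
    (hPrange : LinearMap.range (P : H →ₗ[ℂ] H) = M)
    (M₁ : Submodule ℂ H)
    (X : H →L[ℂ] H) (hXsa : IsSelfAdjoint X) (hXidem : X ∘L X = X)
    (hXrange : LinearMap.range (X : H →ₗ[ℂ] H) = M₁) :
    ((∀ x ∈ M₁, ∀ y ∈ M₁, (inner ℂ x (J y) : ℂ) = 0) ∧
      M₁ ⊔ M₁.map J.toLinearMap = M) ↔
      X + J ∘L X ∘L J = P := by
  subst hPrange hXrange
  have hJ2' : J * J = 1 := hJ2
  have hX : IsStarProjection X := ⟨hXidem, hXsa⟩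
  have hP : IsStarProjection P := ⟨hPidem, hPsa⟩
  have hY : IsStarProjection (J * X * J) := hX.conjugate_of_involution hJsa hJ2'
  have hrange (h0 : X * (J * X * J) = 0) :
      LinearMap.range ((X + J * X * J : H →L[ℂ] H) : H →ₗ[ℂ] H) =
        LinearMap.range (X : H →ₗ[ℂ] H) ⊔ (LinearMap.range (X : H →ₗ[ℂ] H)).map J.toLinearMap := by
    have hJJ : (J : H →ₗ[ℂ] H) * J = 1 := by rw [← ContinuousLinearMap.toLinearMap_mul, hJ2']; rfl
    rw [hX.range_add hY h0, ContinuousLinearMap.toLinearMap_mul,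
      ContinuousLinearMap.toLinearMap_mul, LinearMap.range_conjugate_of_involution hJJ]
  have hkey : X * (J * X * J) = 0 ↔ ∀ x ∈ LinearMap.range (X : H →ₗ[ℂ] H),
      ∀ y ∈ LinearMap.range (X : H →ₗ[ℂ] H), inner ℂ x (J y) = 0 := by
    rw [← hXsa.mul_mul_self_eq_zero_iff,
      ← IsUnit.mul_left_eq_zero (a := X * J * X) ⟨⟨J, J, hJ2', hJ2'⟩, rfl⟩]
    simp only [mul_assoc]
  have hconj : J ∘L X ∘L J = J * X * J := (mul_assoc J X J).symm
  rw [← hkey, hconj]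
  constructor
  · rintro ⟨h0, hsum⟩
    exact ContinuousLinearMap.IsStarProjection.ext (hX.add hY h0) hP (by rw [hrange h0, hsum])
  · intro h
    have := IsAddTorsionFree.of_isTorsionFree ℂ (H →L[ℂ] H)
    have h0 : X * (J * X * J) = 0 := (hX.add_iff hY).mp (h ▸ hP)
    exact ⟨h0, by rw [← hrange h0, h]⟩

/-- A closed subspace `𝔐₁ ⊆ 𝔐` (with orthogonal projection `X` onto `𝔐₁`)
is hypermaximal neutral, i.e. `𝔐 = 𝔐₁ ⊕ J(𝔐₁)` orthogonally, iff `X + J X J = P`, where `P`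
is the orthogonal projection onto the `J`-invariant closed subspace `𝔐`. -/
theorem stmt_15
    {H : Type*} [NormedAddCommGroup H] [InnerProductSpace ℂ H] [CompleteSpace H]
    (J : H →L[ℂ] H) (hJsa : IsSelfAdjoint J) (hJ2 : J ∘L J = 1)
    (M : Submodule ℂ H) (hMc : IsClosed (M : Set H))
    (hJM : M.map J.toLinearMap = M)
    (P : H →L[ℂ] H) (hPsa : IsSelfAdjoint P) (hPidem : P ∘L P = P)
    (hPrange : LinearMap.range (P : H →ₗ[ℂ] H) = M)
    (M₁ : Submodule ℂ H) (hM₁c : IsClosed (M₁ : Set H)) (hM₁M : M₁ ≤ M)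
    (X : H →L[ℂ] H) (hXsa : IsSelfAdjoint X) (hXidem : X ∘L X = X)
    (hXrange : LinearMap.range (X : H →ₗ[ℂ] H) = M₁) :
    ((∀ x ∈ M₁, ∀ y ∈ M₁, (inner ℂ x (J y) : ℂ) = 0) ∧
      M₁ ⊔ M₁.map J.toLinearMap = M) ↔
      X + J ∘L X ∘L J = P :=
  stmt_15_general J hJsa hJ2 M P hPsa hPidem hPrange M₁ X hXsa hXidem hXrange
end

section
/- In the Hilbert space ℓ²(ℕ) of square-summable complex sequences indexed by n ≥ 1, let Ξ be the bounded diagonal operator defined on the standard orthonormal basis by Ξ eₙ = (√(2n−1)/n) eₙ, and for real δ > ½ let χ_δ ∈ ℓ² be the sequence (n^{−δ})_{n≥1}. Then χ_δ belongs to the range of Ξ if and only if δ > 1. -/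
/-!
The diagonal entries `ξₙ = √(2n+1)/(n+1)` never vanish, so the only candidate preimage is
`cₙ = (n+1)^(-δ) / ξₙ`, with `|cₙ|² = (n+1)^(1-2δ) · (n+1)/(2n+1)`. The last factor lies in
`[1/2, 1]`, so `c ∈ ℓ²` iff `∑ (n+1)^(1-2δ) < ∞`, i.e. iff `δ > 1`.
-/

open Real Set

theorem summable_nat_add_one_rpow_iff {p : ℝ} :
    Summable (fun n : ℕ => ((n : ℝ) + 1) ^ p) ↔ p < -1 := by
  simpa using (summable_nat_add_iff (f := fun n : ℕ => (n : ℝ) ^ p) 1).trans summable_nat_rpow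

theorem summable_mul_iff_of_mem_Icc {ι : Type*} {f w : ι → ℝ} {a b : ℝ} (ha : 0 < a)
    (hf : ∀ i, 0 ≤ f i) (hw : ∀ i, w i ∈ Icc a b) :
    Summable (fun i => f i * w i) ↔ Summable f := by
  refine ⟨fun h => (h.div_const a).of_nonneg_of_le hf fun i => ?_,
    fun h => (h.mul_right b).of_nonneg_of_le (fun i => ?_) fun i => ?_⟩
  · rw [le_div_iff₀ ha]; exact mul_le_mul_of_nonneg_left (hw i).1 (hf i)
  · exact mul_nonneg (hf i) (ha.le.trans (hw i).1)
  · exact mul_le_mul_of_nonneg_left (hw i).2 (hf i)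

theorem exists_memℓp_mul_eq_iff {ι 𝕜 : Type*} [NormedDivisionRing 𝕜] {ξ χ : ι → 𝕜}
    (hξ : ∀ i, ξ i ≠ 0) {p : ENNReal} :
    (∃ c : ι → 𝕜, Memℓp c p ∧ ∀ i, ξ i * c i = χ i) ↔ Memℓp (fun i => (ξ i)⁻¹ * χ i) p := by
  refine ⟨fun ⟨c, hc, hcχ⟩ => ?_, fun h => ⟨_, h, fun i => mul_inv_cancel_left₀ (hξ i) (χ i)⟩⟩
  convert hc using 2 with i
  rw [← hcχ i, inv_mul_cancel_left₀ (hξ i)]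

theorem memℓp_two_iff_summable_sq {ι E : Type*} [NormedAddCommGroup E] {f : ι → E} :
    Memℓp f 2 ↔ Summable (fun i => ‖f i‖ ^ 2) := by
  simpa using memℓp_gen_iff (p := 2) (f := f) (by norm_num)

theorem sq_rpow_div_sqrt (δ : ℝ) (n : ℕ) :
    (((n : ℝ) + 1) ^ (-δ) / (√(2 * (n : ℝ) + 1) / ((n : ℝ) + 1))) ^ 2 =
      ((n : ℝ) + 1) ^ (1 - 2 * δ) * (((n : ℝ) + 1) / (2 * (n : ℝ) + 1)) := by
  have hx : (0 : ℝ) < (n : ℝ) + 1 := by positivity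
  rw [div_div_eq_mul_div, div_pow, mul_pow, sq_sqrt (by positivity), ← rpow_natCast,
    ← rpow_mul hx.le, sub_eq_add_neg, rpow_add hx, rpow_one]
  push_cast
  field_simp

theorem nat_add_one_div_two_mul_add_one_mem_Icc (n : ℕ) :
    ((n : ℝ) + 1) / (2 * (n : ℝ) + 1) ∈ Icc (1 / 2 : ℝ) 1 := by
  constructor
  · rw [le_div_iff₀ (by positivity)]; linarith
  · rw [div_le_one (by positivity)]; linarith [(n.cast_nonneg : (0 : ℝ) ≤ n)]

theorem stmt_17_general (δ : ℝ) :
    (∃ c : ℕ → ℂ, Memℓp c 2 ∧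
      ∀ n : ℕ, ((Real.sqrt (2 * (n : ℝ) + 1) / ((n : ℝ) + 1) : ℝ) : ℂ) * c n =
        ((((n : ℝ) + 1) ^ (-δ) : ℝ) : ℂ)) ↔ 1 < δ := by
  have hξ (n : ℕ) : ((√(2 * (n : ℝ) + 1) / ((n : ℝ) + 1) : ℝ) : ℂ) ≠ 0 :=
    Complex.ofReal_ne_zero.2 (div_pos (sqrt_pos.2 (by positivity)) (by positivity)).ne'
  rw [exists_memℓp_mul_eq_iff hξ, memℓp_two_iff_summable_sq]
  simp_rw [← Complex.ofReal_inv, ← Complex.ofReal_mul, Complex.norm_real, Real.norm_eq_abs, sq_abs,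
    inv_mul_eq_div, sq_rpow_div_sqrt]
  rw [summable_mul_iff_of_mem_Icc (by norm_num) (fun n => by positivity)
    nat_add_one_div_two_mul_add_one_mem_Icc, summable_nat_add_one_rpow_iff]
  constructor <;> intro h <;> linarith

/-- In `ℓ²` (sequences indexed by `n ≥ 1`, here shifted to `ℕ` via
`n ↦ n + 1`), the vector `χ_δ = (n^{−δ})_{n ≥ 1}` lies in the range of the bounded diagonal
operator `Ξ eₙ = (√(2n−1)/n) eₙ` iff `δ > 1`; membership in the range amounts to the existence
of an `ℓ²`-sequence `c` with `(√(2n−1)/n) · cₙ = n^{−δ}` for all `n ≥ 1`. -/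
theorem stmt_17 (δ : ℝ) (hδ : 1 / 2 < δ) :
    (∃ c : ℕ → ℂ, Memℓp c 2 ∧
      ∀ n : ℕ, ((Real.sqrt (2 * (n : ℝ) + 1) / ((n : ℝ) + 1) : ℝ) : ℂ) * c n =
        ((((n : ℝ) + 1) ^ (-δ) : ℝ) : ℂ)) ↔ 1 < δ :=
  stmt_17_general δ
end

section
/- Let 𝒟 be a dense linear subspace of ℋ and C : 𝒟 → ℋ a linear map. The following are equivalent: (i) there exist a closed positive subspace L₊ and a closed negative subspace L₋ of the Krein space (ℋ, [·,·]) with [f₊, f₋] = 0 for all f₊ ∈ L₊, f₋ ∈ L₋, such that 𝒟 = L₊ ⊕ L₋ (algebraic direct sum) and C(f₊ + f₋) = f₊ − f₋ for all f₊ ∈ L₊, f₋ ∈ L₋; (ii) C maps 𝒟 into 𝒟 with C(Cf) = f for all f ∈ 𝒟, and the operator G₀ := J ∘ C with domain 𝒟 is symmetric (⟨G₀f, g⟩ = ⟨f, G₀g⟩ for f, g ∈ 𝒟), positive (⟨G₀f, f⟩ > 0 for nonzero f ∈ 𝒟), and has closed graph. -/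
/-!
If `𝒟 = L₊ ⊕ L₋` and `C` is the reflection `f₊ + f₋ ↦ f₊ - f₋`, then `L₊`-`L₋` orthogonality gives
`[C f, g] = [f₊, g₊] - [f₋, g₋]`, a symmetric form which is positive because `L₊` is positive and
`L₋` negative; the graph of `J C` is the preimage of `L₊ × L₋` under the homeomorphism
`(x, y) ↦ ((x + J y) / 2, (x - J y) / 2)`, hence closed. Conversely `L₊` and `L₋` must be the
`±1`-eigenspaces of the involution `C` in `𝒟`: positivity of `J C` makes them definite of opposite
signs, its symmetry makes them `J`-orthogonal, and since `J` is injective they are preimages of the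
closed graph of `J C` under `f ↦ (f, ±J f)`.
-/

open Module.End

section Reflection

variable {R M : Type*} [Field R] [AddCommGroup M] [Module R M]

def IsReflection (C : M →ₗ[R] M) (Lp Lm : Submodule R M) : Prop :=
  ∀ fp ∈ Lp, ∀ fm ∈ Lm, C (fp + fm) = fp - fm

variable {C : M →ₗ[R] M} {Lp Lm : Submodule R M}

theorem IsReflection.apply_mem_sup (hC : IsReflection C Lp Lm) {f : M} (hf : f ∈ Lp ⊔ Lm) :
    C f ∈ Lp ⊔ Lm := by
  obtain ⟨fp, hfp, fm, hfm, rfl⟩ := Submodule.mem_sup.mp hf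
  rw [hC fp hfp fm hfm]
  exact Submodule.sub_mem _ (Submodule.mem_sup_left hfp) (Submodule.mem_sup_right hfm)

theorem IsReflection.apply_apply (hC : IsReflection C Lp Lm) {f : M} (hf : f ∈ Lp ⊔ Lm) :
    C (C f) = f := by
  obtain ⟨fp, hfp, fm, hfm, rfl⟩ := Submodule.mem_sup.mp hf
  rw [hC fp hfp fm hfm, sub_eq_add_neg, hC fp hfp (-fm) (neg_mem hfm), sub_neg_eq_add]

theorem isReflection_inf_eigenspace (𝒟 : Submodule R M) :
    IsReflection C (𝒟 ⊓ eigenspace C 1) (𝒟 ⊓ eigenspace C (-1)) := by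
  intro fp hfp fm hfm
  rw [map_add, mem_eigenspace_iff.mp hfp.2, mem_eigenspace_iff.mp hfm.2, one_smul, neg_one_smul,
    sub_eq_add_neg]

theorem isClosed_inf_eigenspace [TopologicalSpace M] [ContinuousConstSMul R M] {J : M →L[R] M}
    {𝒟 : Submodule R M} (hgraph : IsClosed {p : M × M | p.1 ∈ 𝒟 ∧ p.2 = J (C p.1)})
    (hJ : Function.Injective J) (μ : R) :
    IsClosed ((𝒟 ⊓ eigenspace C μ : Submodule R M) : Set M) := by
  suffices ((𝒟 ⊓ eigenspace C μ : Submodule R M) : Set M) =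
      (fun f => (f, μ • J f)) ⁻¹' {p : M × M | p.1 ∈ 𝒟 ∧ p.2 = J (C p.1)} from
    this ▸ hgraph.preimage (by fun_prop)
  ext f
  simp only [SetLike.mem_coe, Submodule.mem_inf, mem_eigenspace_iff, Set.mem_preimage,
    Set.mem_ofPred_eq, ← map_smul, hJ.eq_iff, eq_comm]

variable [CharZero R]

theorem inf_eigenspace_one_sup_inf_eigenspace_neg_one {𝒟 : Submodule R M}
    (hCD : ∀ f ∈ 𝒟, C f ∈ 𝒟) (hinv : ∀ f ∈ 𝒟, C (C f) = f) :
    𝒟 ⊓ eigenspace C 1 ⊔ 𝒟 ⊓ eigenspace C (-1) = 𝒟 := by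
  refine le_antisymm (sup_le inf_le_left inf_le_left) fun f hf => ?_
  have hp : (2 : R)⁻¹ • (f + C f) ∈ 𝒟 ⊓ eigenspace C 1 := by
    refine ⟨Submodule.smul_mem _ _ (add_mem hf (hCD f hf)), mem_eigenspace_iff.mpr ?_⟩
    rw [map_smul, map_add, hinv f hf, one_smul, add_comm]
  have hm : (2 : R)⁻¹ • (f - C f) ∈ 𝒟 ⊓ eigenspace C (-1) := by
    refine ⟨Submodule.smul_mem _ _ (sub_mem hf (hCD f hf)), mem_eigenspace_iff.mpr ?_⟩
    rw [map_smul, map_sub, hinv f hf, neg_one_smul, ← smul_neg, neg_sub]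
  convert Submodule.add_mem_sup hp hm using 1
  module

theorem inf_eigenspace_one_inf_inf_eigenspace_neg_one (𝒟 : Submodule R M) :
    𝒟 ⊓ eigenspace C 1 ⊓ (𝒟 ⊓ eigenspace C (-1)) = ⊥ := by
  have hne : (1 : R) ≠ -1 := by norm_num
  exact (((eigenspaces_iSupIndep C).pairwiseDisjoint hne).mono inf_le_right inf_le_right).eq_bot

theorem IsReflection.isClosed_graph [TopologicalSpace M] [IsTopologicalAddGroup M]
    [ContinuousConstSMul R M] {J : M →L[R] M} (hC : IsReflection C Lp Lm)
    (hJ : Function.Involutive J) (hLp : IsClosed (Lp : Set M)) (hLm : IsClosed (Lm : Set M)) :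
    IsClosed {p : M × M | p.1 ∈ Lp ⊔ Lm ∧ p.2 = J (C p.1)} := by
  let φ : M × M → M × M := fun p => ((2 : R)⁻¹ • (p.1 + J p.2), (2 : R)⁻¹ • (p.1 - J p.2))
  suffices {p : M × M | p.1 ∈ Lp ⊔ Lm ∧ p.2 = J (C p.1)} = φ ⁻¹' (Lp ×ˢ Lm) from
    this ▸ (hLp.prod hLm).preimage (by fun_prop)
  ext ⟨x, y⟩
  constructor
  · rintro ⟨hx, hy : y = J (C x)⟩
    obtain ⟨fp, hfp, fm, hfm, rfl⟩ := Submodule.mem_sup.mp hx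
    rw [hC fp hfp fm hfm] at hy
    subst hy
    constructor
    · show (2 : R)⁻¹ • (fp + fm + J (J (fp - fm))) ∈ Lp
      convert hfp using 1
      rw [hJ]
      module
    · show (2 : R)⁻¹ • (fp + fm - J (J (fp - fm))) ∈ Lm
      convert hfm using 1
      rw [hJ]
      module
  · rintro ⟨hp, hm⟩
    have hx : x = (φ (x, y)).1 + (φ (x, y)).2 := by module
    have hCx : C x = J y := by
      rw [hx, hC _ hp _ hm]
      module
    exact ⟨hx ▸ Submodule.add_mem_sup hp hm, by rw [hCx, hJ]⟩

end Reflection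

section Krein

open scoped InnerProductSpace

variable {H : Type*} [NormedAddCommGroup H] [InnerProductSpace ℂ H] {J C : H →ₗ[ℂ] H}
  {Lp Lm : Submodule ℂ H}

theorem IsReflection.inner_J_apply (hC : IsReflection C Lp Lm) (hJ : J.IsSymmetric)
    (horth : ∀ fp ∈ Lp, ∀ fm ∈ Lm, ⟪J fp, fm⟫_ℂ = 0) {fp gp fm gm : H} (hfp : fp ∈ Lp)
    (hgp : gp ∈ Lp) (hfm : fm ∈ Lm) (hgm : gm ∈ Lm) :
    ⟪J (C (fp + fm)), gp + gm⟫_ℂ = ⟪J fp, gp⟫_ℂ - ⟪J fm, gm⟫_ℂ := by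
  have hpm : ⟪J fp, gm⟫_ℂ = 0 := horth fp hfp gm hgm
  have hmp : ⟪J fm, gp⟫_ℂ = 0 := by
    rw [hJ, ← inner_conj_symm, horth gp hgp fm hfm, map_zero]
  rw [hC fp hfp fm hfm, map_sub, inner_sub_left, inner_add_right, inner_add_right, hpm, hmp]
  ring

theorem IsReflection.inner_J_apply_comm (hC : IsReflection C Lp Lm) (hJ : J.IsSymmetric)
    (horth : ∀ fp ∈ Lp, ∀ fm ∈ Lm, ⟪J fp, fm⟫_ℂ = 0) {f g : H} (hf : f ∈ Lp ⊔ Lm)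
    (hg : g ∈ Lp ⊔ Lm) : ⟪J (C f), g⟫_ℂ = ⟪f, J (C g)⟫_ℂ := by
  obtain ⟨fp, hfp, fm, hfm, rfl⟩ := Submodule.mem_sup.mp hf
  obtain ⟨gp, hgp, gm, hgm, rfl⟩ := Submodule.mem_sup.mp hg
  rw [hC.inner_J_apply hJ horth hfp hgp hfm hgm, ← inner_conj_symm (fp + fm),
    hC.inner_J_apply hJ horth hgp hfp hgm hfm, map_sub, hJ gp, hJ gm, inner_conj_symm,
    inner_conj_symm, hJ, hJ]

theorem IsReflection.re_inner_J_apply_pos (hC : IsReflection C Lp Lm) (hJ : J.IsSymmetric)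
    (horth : ∀ fp ∈ Lp, ∀ fm ∈ Lm, ⟪J fp, fm⟫_ℂ = 0)
    (hpos : ∀ f ∈ Lp, f ≠ 0 → 0 < (⟪J f, f⟫_ℂ).re) (hneg : ∀ f ∈ Lm, f ≠ 0 → (⟪J f, f⟫_ℂ).re < 0)
    {f : H} (hf : f ∈ Lp ⊔ Lm) (hf0 : f ≠ 0) : 0 < (⟪J (C f), f⟫_ℂ).re := by
  obtain ⟨fp, hfp, fm, hfm, rfl⟩ := Submodule.mem_sup.mp hf
  rw [hC.inner_J_apply hJ horth hfp hfp hfm hfm, Complex.sub_re]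
  have hp : 0 ≤ (⟪J fp, fp⟫_ℂ).re := by
    rcases eq_or_ne fp 0 with rfl | h
    · simp
    · exact (hpos fp hfp h).le
  have hm : (⟪J fm, fm⟫_ℂ).re ≤ 0 := by
    rcases eq_or_ne fm 0 with rfl | h
    · simp
    · exact (hneg fm hfm h).le
  obtain h | h : fp ≠ 0 ∨ fm ≠ 0 := by
    contrapose! hf0
    simp [hf0]
  · linarith [hpos fp hfp h]
  · linarith [hneg fm hfm h]

variable {𝒟 : Submodule ℂ H}

theorem inner_J_eq_zero_of_mem_eigenspace (hJ : J.IsSymmetric)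
    (hsymm : ∀ f ∈ 𝒟, ∀ g ∈ 𝒟, ⟪J (C f), g⟫_ℂ = ⟪f, J (C g)⟫_ℂ) {fp fm : H}
    (hfp : fp ∈ 𝒟 ⊓ eigenspace C 1) (hfm : fm ∈ 𝒟 ⊓ eigenspace C (-1)) :
    ⟪J fp, fm⟫_ℂ = 0 := by
  have h := hsymm fp hfp.1 fm hfm.1
  rw [mem_eigenspace_iff.mp hfp.2, mem_eigenspace_iff.mp hfm.2, one_smul, neg_one_smul,
    map_neg, inner_neg_right, ← hJ] at h
  linear_combination h / 2

theorem re_inner_J_self_neg_of_mem_eigenspace_neg_one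
    (hpos : ∀ f ∈ 𝒟, f ≠ 0 → 0 < (⟪J (C f), f⟫_ℂ).re) {f : H} (hf : f ∈ 𝒟 ⊓ eigenspace C (-1))
    (hf0 : f ≠ 0) :
    (⟪J f, f⟫_ℂ).re < 0 := by
  have h := hpos f hf.1 hf0
  rw [mem_eigenspace_iff.mp hf.2, neg_one_smul, map_neg, inner_neg_left, Complex.neg_re] at h
  linarith

end Krein

theorem stmt_18_general
    {H : Type*} [NormedAddCommGroup H] [InnerProductSpace ℂ H] [CompleteSpace H]
    (J : H →L[ℂ] H) (hJsa : IsSelfAdjoint J) (hJ2 : J ∘L J = 1)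
    (𝒟 : Submodule ℂ H)
    (C : H →ₗ[ℂ] H) :
    (∃ Lp Lm : Submodule ℂ H,
      IsClosed (Lp : Set H) ∧ IsClosed (Lm : Set H) ∧
      (∀ f ∈ Lp, f ≠ 0 → 0 < (inner ℂ (J f) f : ℂ).re) ∧
      (∀ f ∈ Lm, f ≠ 0 → (inner ℂ (J f) f : ℂ).re < 0) ∧
      (∀ fp ∈ Lp, ∀ fm ∈ Lm, (inner ℂ (J fp) fm : ℂ) = 0) ∧
      Lp ⊓ Lm = ⊥ ∧ 𝒟 = Lp ⊔ Lm ∧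
      (∀ fp ∈ Lp, ∀ fm ∈ Lm, C (fp + fm) = fp - fm)) ↔
    ((∀ f ∈ 𝒟, C f ∈ 𝒟) ∧ (∀ f ∈ 𝒟, C (C f) = f) ∧
      (∀ f ∈ 𝒟, ∀ g ∈ 𝒟, (inner ℂ (J (C f)) g : ℂ) = inner ℂ f (J (C g))) ∧
      (∀ f ∈ 𝒟, f ≠ 0 → 0 < (inner ℂ (J (C f)) f : ℂ).re) ∧
      IsClosed {p : H × H | p.1 ∈ 𝒟 ∧ p.2 = J (C p.1)}) := by
  have hJ : Function.Involutive J := fun f => by simpa using congr($hJ2 f)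
  constructor
  · rintro ⟨Lp, Lm, hLp, hLm, hpos, hneg, horth, -, rfl, (hC : IsReflection C Lp Lm)⟩
    exact ⟨fun f => hC.apply_mem_sup, fun f => hC.apply_apply,
      fun f hf g hg => hC.inner_J_apply_comm hJsa.isSymmetric horth hf hg,
      fun f => hC.re_inner_J_apply_pos hJsa.isSymmetric horth hpos hneg,
      hC.isClosed_graph hJ hLp hLm⟩
  · rintro ⟨hCD, hinv, hsymm, hpos, hgraph⟩
    refine ⟨𝒟 ⊓ eigenspace C 1, 𝒟 ⊓ eigenspace C (-1),
      isClosed_inf_eigenspace hgraph hJ.injective 1,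
      isClosed_inf_eigenspace hgraph hJ.injective (-1), fun f hf hf0 => ?_,
      fun f hf hf0 => re_inner_J_self_neg_of_mem_eigenspace_neg_one hpos hf hf0,
      fun fp hfp fm hfm => inner_J_eq_zero_of_mem_eigenspace hJsa.isSymmetric hsymm hfp hfm,
      inf_eigenspace_one_inf_inf_eigenspace_neg_one 𝒟,
      (inf_eigenspace_one_sup_inf_eigenspace_neg_one hCD hinv).symm,
      isReflection_inf_eigenspace 𝒟⟩
    simpa [mem_eigenspace_iff.mp hf.2] using hpos f hf.1 hf0

/-- A linear map `C` on a dense subspace `𝒟` comes from a pair of dual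
definite closed subspaces `L±` with `𝒟 = L₊ ⊕ L₋` and `C(f₊ + f₋) = f₊ − f₋` iff `C` is an
involution of `𝒟` such that `G₀ = J C` (with domain `𝒟`) is symmetric, positive and has
closed graph. -/
theorem stmt_18
    {H : Type*} [NormedAddCommGroup H] [InnerProductSpace ℂ H] [CompleteSpace H]
    (J : H →L[ℂ] H) (hJsa : IsSelfAdjoint J) (hJ2 : J ∘L J = 1)
    (𝒟 : Submodule ℂ H) (hdense : Dense (𝒟 : Set H))
    (C : H →ₗ[ℂ] H) :
    (∃ Lp Lm : Submodule ℂ H,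
      IsClosed (Lp : Set H) ∧ IsClosed (Lm : Set H) ∧
      (∀ f ∈ Lp, f ≠ 0 → 0 < (inner ℂ (J f) f : ℂ).re) ∧
      (∀ f ∈ Lm, f ≠ 0 → (inner ℂ (J f) f : ℂ).re < 0) ∧
      (∀ fp ∈ Lp, ∀ fm ∈ Lm, (inner ℂ (J fp) fm : ℂ) = 0) ∧
      Lp ⊓ Lm = ⊥ ∧ 𝒟 = Lp ⊔ Lm ∧
      (∀ fp ∈ Lp, ∀ fm ∈ Lm, C (fp + fm) = fp - fm)) ↔
    ((∀ f ∈ 𝒟, C f ∈ 𝒟) ∧ (∀ f ∈ 𝒟, C (C f) = f) ∧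
      (∀ f ∈ 𝒟, ∀ g ∈ 𝒟, (inner ℂ (J (C f)) g : ℂ) = inner ℂ f (J (C g))) ∧
      (∀ f ∈ 𝒟, f ≠ 0 → 0 < (inner ℂ (J (C f)) f : ℂ).re) ∧
      IsClosed {p : H × H | p.1 ∈ 𝒟 ∧ p.2 = J (C p.1)}) :=
  stmt_18_general J hJsa hJ2 𝒟 C
end
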